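/- arXiv:2501.00898 — 7 statements merged into one kernel-verified Lean document; each statement's English description precedes it below -/
import Mathlib

section
/- Let Ω ⊆ ℂ be a connected open set that is symmetric about the real axis (the image of Ω under complex conjugation equals Ω), and suppose Γ := Ω ∩ ℝ is nonempty. Set Ω⁺ = {z ∈ Ω : Im z > 0} and Ω⁻ = {z ∈ Ω : Im z < 0}. Let f : ℂ → ℂ be analytic (complex differentiable) on Ω⁺, continuous on Ω⁺ ∪ Γ, and real-valued on Γ. Then there exists a function F : ℂ → ℂ analytic on all of Ω such that F agrees with f on Ω⁺ ∪ Γ and F(conj z) = conj(F z) for every z ∈ Ω. -/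
/-!
Reflect `f` into the lower half-plane as `z ↦ conj (f (conj z))`. This is holomorphic off the
real axis, and since `f` is real on `Γ` the two halves glue to a function continuous on `Ω`.
Holomorphy across the axis then follows from Morera's theorem: cutting a rectangle in `Ω` along
the real axis leaves rectangles whose interiors miss the axis, and the Cauchy–Goursat theorem
for these only needs continuity up to the boundary.
-/

open Complex ComplexConjugate Set intervalIntegral
open scoped Interval

namespace Complex

variable {E : Type*} [NormedAddCommGroup E] {f : ℂ → E} {z w : ℂ}

lemma rectangle_subset_of_im_mem {t : ℝ} (ht : t ∈ [[z.im, w.im]]) :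
    Rectangle z (w.re + t * I) ⊆ Rectangle z w ∧ Rectangle (z.re + t * I) w ⊆ Rectangle z w := by
  simp only [Rectangle, add_re, ofReal_re, mul_re, I_re, mul_zero, ofReal_im, I_im, mul_one,
    sub_self, add_zero, add_im, mul_im, zero_add, reProdIm_subset_iff]
  exact ⟨prod_mono subset_rfl (uIcc_subset_uIcc_left ht),
    prod_mono subset_rfl (uIcc_subset_uIcc_right ht)⟩

lemma _root_.ContinuousOn.intervalIntegrable_vertical (hf : ContinuousOn f (Rectangle z w))
    {x a b : ℝ} (hx : x ∈ [[z.re, w.re]]) (ha : a ∈ [[z.im, w.im]]) (hb : b ∈ [[z.im, w.im]]) :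
    IntervalIntegrable (fun y : ℝ ↦ f (x + y * I)) MeasureTheory.volume a b := by
  refine (hf.comp (by fun_prop) fun y hy ↦ ?_).intervalIntegrable
  simp only [Rectangle, mem_reProdIm, add_re, ofReal_re, mul_re, I_re, mul_zero, ofReal_im,
    I_im, mul_one, sub_self, add_zero, add_im, mul_im, zero_add]
  exact ⟨hx, uIcc_subset_uIcc ha hb hy⟩

variable [NormedSpace ℂ E]

-- `wedgeIntegral z w f + wedgeIntegral w z f` is the integral of `f` round `Rectangle z w`.
lemma wedgeIntegral_add_wedgeIntegral_split (hf : ContinuousOn f (Rectangle z w)) {t : ℝ}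
    (ht : t ∈ [[z.im, w.im]]) :
    wedgeIntegral z w f + wedgeIntegral w z f =
      (wedgeIntegral z (w.re + t * I) f + wedgeIntegral (w.re + t * I) z f) +
      (wedgeIntegral (z.re + t * I) w f + wedgeIntegral w (z.re + t * I) f) := by
  have hz : z.im ∈ [[z.im, w.im]] := left_mem_uIcc
  have hw : w.im ∈ [[z.im, w.im]] := right_mem_uIcc
  simp only [wedgeIntegral_add_wedgeIntegral_eq, add_re, ofReal_re, mul_re, I_re, mul_zero,
    ofReal_im, I_im, mul_one, sub_self, add_zero, add_im, mul_im, zero_add]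
  rw [← integral_add_adjacent_intervals (hf.intervalIntegrable_vertical right_mem_uIcc hz ht)
      (hf.intervalIntegrable_vertical right_mem_uIcc ht hw),
    ← integral_add_adjacent_intervals (hf.intervalIntegrable_vertical left_mem_uIcc hz ht)
      (hf.intervalIntegrable_vertical left_mem_uIcc ht hw)]
  simp only [smul_add]
  abel

lemma wedgeIntegral_add_wedgeIntegral_eq_zero_of_notMem_Ioo
    (h0 : (0 : ℝ) ∉ Ioo (min z.im w.im) (max z.im w.im)) (hc : ContinuousOn f (Rectangle z w))
    (hd : ∀ u ∈ Rectangle z w, u.im ≠ 0 → DifferentiableAt ℂ f u) :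
    wedgeIntegral z w f + wedgeIntegral w z f = 0 := by
  rw [wedgeIntegral_add_wedgeIntegral_eq]
  refine integral_boundary_rect_eq_zero_of_differentiable_on_off_countable f z w ∅
    countable_empty hc ?_
  rintro u ⟨⟨hre, him⟩, -⟩
  exact hd u ⟨Ioo_subset_Icc_self hre, Ioo_subset_Icc_self him⟩ fun h ↦ h0 (h ▸ him)

lemma isConservativeOn_of_continuousOn_of_differentiableAt_im_ne_zero {U : Set ℂ}
    (hc : ContinuousOn f U) (hd : ∀ u ∈ U, u.im ≠ 0 → DifferentiableAt ℂ f u) :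
    IsConservativeOn f U := by
  intro z w hzw
  rw [← add_eq_zero_iff_eq_neg]
  have hd' {z' w' : ℂ} (h : Rectangle z' w' ⊆ Rectangle z w) :
      ∀ u ∈ Rectangle z' w', u.im ≠ 0 → DifferentiableAt ℂ f u :=
    fun u hu ↦ hd u (hzw (h hu))
  by_cases h0 : (0 : ℝ) ∈ Ioo (min z.im w.im) (max z.im w.im)
  · obtain ⟨hsub₁, hsub₂⟩ := rectangle_subset_of_im_mem (Ioo_subset_Icc_self h0)
    have hcw := hc.mono hzw
    rw [wedgeIntegral_add_wedgeIntegral_split hcw (Ioo_subset_Icc_self h0),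
      wedgeIntegral_add_wedgeIntegral_eq_zero_of_notMem_Ioo (by simpa using le_of_lt)
        (hcw.mono hsub₁) (hd' hsub₁),
      wedgeIntegral_add_wedgeIntegral_eq_zero_of_notMem_Ioo (by simpa using le_of_lt)
        (hcw.mono hsub₂) (hd' hsub₂),
      add_zero]
  · exact wedgeIntegral_add_wedgeIntegral_eq_zero_of_notMem_Ioo h0 (hc.mono hzw) (hd' subset_rfl)

theorem differentiableOn_of_continuousOn_of_differentiableAt_im_ne_zero [CompleteSpace E]
    {U : Set ℂ} (hU : IsOpen U) (hc : ContinuousOn f U)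
    (hd : ∀ u ∈ U, u.im ≠ 0 → DifferentiableAt ℂ f u) :
    DifferentiableOn ℂ f U :=
  (isConservativeOn_and_continuousOn_iff_isDifferentiableOn hU).mp
    ⟨isConservativeOn_of_continuousOn_of_differentiableAt_im_ne_zero hc hd, hc⟩

end Complex

section Reflection

variable {f : ℂ → ℂ} {z : ℂ}

noncomputable def schwarzReflection (f : ℂ → ℂ) (z : ℂ) : ℂ :=
  if 0 ≤ z.im then f z else conj (f (conj z))

lemma schwarzReflection_of_nonneg_im (hz : 0 ≤ z.im) : schwarzReflection f z = f z := if_pos hz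

lemma schwarzReflection_of_im_neg (hz : z.im < 0) :
    schwarzReflection f z = conj (f (conj z)) := if_neg hz.not_ge

lemma schwarzReflection_conj (hreal : z.im = 0 → (f z).im = 0) :
    schwarzReflection f (conj z) = conj (schwarzReflection f z) := by
  rcases lt_trichotomy z.im 0 with hz | hz | hz
  · rw [schwarzReflection_of_nonneg_im (by simp [hz.le]), schwarzReflection_of_im_neg hz,
      conj_conj]
  · rw [conj_eq_iff_im.mpr hz, schwarzReflection_of_nonneg_im hz.ge, conj_eq_iff_im.mpr (hreal hz)]
  · rw [schwarzReflection_of_im_neg (by simpa using hz), schwarzReflection_of_nonneg_im hz.le,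
      conj_conj]

lemma differentiableAt_schwarzReflection_of_im_pos (hz : 0 < z.im) (hf : DifferentiableAt ℂ f z) :
    DifferentiableAt ℂ (schwarzReflection f) z :=
  hf.congr_of_eventuallyEq <| ((continuous_im.tendsto z).eventually_const_lt hz).mono
    fun _ hw ↦ schwarzReflection_of_nonneg_im (le_of_lt hw)

lemma differentiableAt_schwarzReflection_of_im_neg (hz : z.im < 0)
    (hf : DifferentiableAt ℂ f (conj z)) : DifferentiableAt ℂ (schwarzReflection f) z :=
  (differentiableAt_conj_conj_iff.mpr hf).congr_of_eventuallyEq <|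
    ((continuous_im.tendsto z).eventually_lt_const hz).mono
      fun _ hw ↦ schwarzReflection_of_im_neg hw

lemma continuousOn_schwarzReflection {Ω : Set ℂ} (hΩ : ∀ z ∈ Ω, conj z ∈ Ω)
    (hf : ContinuousOn f (Ω ∩ {z | 0 ≤ z.im})) (hreal : ∀ z ∈ Ω, z.im = 0 → (f z).im = 0) :
    ContinuousOn (schwarzReflection f) Ω := by
  have hup : closure {z : ℂ | 0 ≤ z.im} = {z | 0 ≤ z.im} :=
    (isClosed_le continuous_const continuous_im).closure_eq
  have hlow : closure {z : ℂ | ¬0 ≤ z.im} = {z | z.im ≤ 0} := by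
    simpa only [not_le] using closure_setOfPred_im_lt 0
  have hreflect : ContinuousOn (fun z ↦ conj (f (conj z))) (Ω ∩ {z | z.im ≤ 0}) :=
    continuous_conj.comp_continuousOn <| hf.comp continuous_conj.continuousOn
      fun z ⟨hz, hz'⟩ ↦ ⟨hΩ z hz, by simpa using hz'⟩
  refine ContinuousOn.if ?_ (by rwa [hup]) (by rwa [hlow])
  rintro z ⟨hz, hfr⟩
  rw [frontier_setOfPred_le_im] at hfr
  rw [conj_eq_iff_im.mpr hfr, conj_eq_iff_im.mpr (hreal z hz hfr)]

end Reflection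

theorem schwarz_reflection_principle_general
    (Ω : Set ℂ) (hΩopen : IsOpen Ω)
    (hΩsym : (starRingEnd ℂ) '' Ω = Ω)
    (Γ : Set ℂ) (hΓ : Γ = Ω ∩ {z : ℂ | z.im = 0})
    (Ωp : Set ℂ) (hΩp : Ωp = {z ∈ Ω | 0 < z.im})
    (f : ℂ → ℂ)
    (hf : ∀ z ∈ Ωp, DifferentiableAt ℂ f z)
    (hfc : ContinuousOn f (Ωp ∪ Γ))
    (hreal : ∀ z ∈ Γ, (f z).im = 0) :
    ∃ F : ℂ → ℂ,
      (∀ z ∈ Ω, DifferentiableAt ℂ F z) ∧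
      (∀ z ∈ Ωp ∪ Γ, F z = f z) ∧
      (∀ z ∈ Ω, F (starRingEnd ℂ z) = starRingEnd ℂ (F z)) := by
  subst hΓ hΩp
  have hconj : ∀ z ∈ Ω, conj z ∈ Ω := fun z hz ↦ hΩsym ▸ mem_image_of_mem _ hz
  have hclosedUpper : {z ∈ Ω | 0 < z.im} ∪ Ω ∩ {z | z.im = 0} = Ω ∩ {z | 0 ≤ z.im} := by
    ext z
    simp only [mem_union, mem_inter_iff, mem_ofPred_eq, le_iff_lt_or_eq, eq_comm (a := (0 : ℝ))]
    tauto
  have hreal' (z) (hz : z ∈ Ω) (him : z.im = 0) : (f z).im = 0 := hreal z ⟨hz, him⟩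
  have hoff (z) (hz : z ∈ Ω) (him : z.im ≠ 0) : DifferentiableAt ℂ (schwarzReflection f) z := by
    rcases him.lt_or_gt with hneg | hpos
    · exact differentiableAt_schwarzReflection_of_im_neg hneg
        (hf _ ⟨hconj z hz, by simpa using hneg⟩)
    · exact differentiableAt_schwarzReflection_of_im_pos hpos (hf z ⟨hz, hpos⟩)
  have hcont := continuousOn_schwarzReflection hconj (hclosedUpper ▸ hfc) hreal'
  refine ⟨schwarzReflection f, fun z hz ↦ ?_, fun z hz ↦ ?_,
    fun z hz ↦ schwarzReflection_conj (hreal' z hz)⟩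
  · exact (differentiableOn_of_continuousOn_of_differentiableAt_im_ne_zero hΩopen hcont hoff
      z hz).differentiableAt (hΩopen.mem_nhds hz)
  · exact schwarzReflection_of_nonneg_im (hclosedUpper ▸ hz).2

/-- Schwarz reflection principle (Theorem 1). -/
theorem schwarz_reflection_principle
    (Ω : Set ℂ) (hΩopen : IsOpen Ω) (hΩconn : IsConnected Ω)
    (hΩsym : (starRingEnd ℂ) '' Ω = Ω)
    (Γ : Set ℂ) (hΓ : Γ = Ω ∩ {z : ℂ | z.im = 0}) (hΓne : Γ.Nonempty)
    (Ωp : Set ℂ) (hΩp : Ωp = {z ∈ Ω | 0 < z.im})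
    (f : ℂ → ℂ)
    (hf : ∀ z ∈ Ωp, DifferentiableAt ℂ f z)
    (hfc : ContinuousOn f (Ωp ∪ Γ))
    (hreal : ∀ z ∈ Γ, (f z).im = 0) :
    ∃ F : ℂ → ℂ,
      (∀ z ∈ Ω, DifferentiableAt ℂ F z) ∧
      (∀ z ∈ Ωp ∪ Γ, F z = f z) ∧
      (∀ z ∈ Ω, F (starRingEnd ℂ z) = starRingEnd ℂ (F z)) :=
  schwarz_reflection_principle_general Ω hΩopen hΩsym Γ hΓ Ωp hΩp f hf hfc hreal
end

section
/- Let Ω ⊆ ℂ be open and let f : ℂ → ℂ be continuous on Ω and analytic on Ω \ ℝ (that is, at every point of Ω not lying on the real axis). Then f is analytic on all of Ω. -/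
open Complex Set intervalIntegral MeasureTheory
open scoped Interval

/-- Boundary integral of `f` over an axis-parallel rectangle. -/
noncomputable def rectBdry (f : ℂ → ℂ) (a b c d : ℝ) : ℂ :=
  (∫ x : ℝ in a..b, f (x + c * I)) - (∫ x : ℝ in a..b, f (x + d * I)) +
    I • (∫ y : ℝ in c..d, f (b + y * I)) - I • ∫ y : ℝ in c..d, f (a + y * I)

lemma rectBdry_eq_zero_of_off (f : ℂ → ℂ) (a b c d : ℝ)
    (Hc : ContinuousOn f ([[a, b]] ×ℂ [[c, d]]))
    (Hd : ∀ x ∈ Ioo (min a b) (max a b) ×ℂ Ioo (min c d) (max c d), DifferentiableAt ℂ f x) :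
    rectBdry f a b c d = 0 := by
  have h := integral_boundary_rect_eq_zero_of_differentiable_on_off_countable f
    (a + c * I) (b + d * I) ∅ countable_empty (by simpa using Hc)
    (fun x hx => by
      refine Hd x ?_
      simpa using hx.1)
  simpa [rectBdry] using h

lemma rectBdry_flip (f : ℂ → ℂ) (a b c d : ℝ) :
    rectBdry f a b d c = -rectBdry f a b c d := by
  simp only [rectBdry, smul_eq_mul, intervalIntegral.integral_symm c d]
  ring

lemma rectBdry_split (f : ℂ → ℂ) (a b c d : ℝ)
    (h1 : IntervalIntegrable (fun y : ℝ => f (a + y * I)) volume c 0)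
    (h1' : IntervalIntegrable (fun y : ℝ => f (a + y * I)) volume 0 d)
    (h2 : IntervalIntegrable (fun y : ℝ => f (b + y * I)) volume c 0)
    (h2' : IntervalIntegrable (fun y : ℝ => f (b + y * I)) volume 0 d) :
    rectBdry f a b c d = rectBdry f a b c 0 + rectBdry f a b 0 d := by
  simp only [rectBdry, smul_eq_mul,
    ← intervalIntegral.integral_add_adjacent_intervals h1 h1',
    ← intervalIntegral.integral_add_adjacent_intervals h2 h2']
  ring

lemma vseg_integrable (f : ℂ → ℂ) {s : Set ℂ} (hcont : ContinuousOn f s) (a c d : ℝ)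
    (hsub : ∀ y ∈ [[c, d]], (a + y * I : ℂ) ∈ s) :
    IntervalIntegrable (fun y : ℝ => f (a + y * I)) volume c d :=
  (hcont.comp (Continuous.continuousOn (by fun_prop)) hsub).intervalIntegrable

lemma hseg_integrable (f : ℂ → ℂ) {s : Set ℂ} (hcont : ContinuousOn f s) (a b c : ℝ)
    (hsub : ∀ x ∈ [[a, b]], (x + c * I : ℂ) ∈ s) :
    IntervalIntegrable (fun x : ℝ => f (x + c * I)) volume a b :=
  (hcont.comp (Continuous.continuousOn (by fun_prop)) hsub).intervalIntegrable

lemma rectBdry_eq_zero (Ω : Set ℂ) (hΩ : IsOpen Ω) (f : ℂ → ℂ)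
    (hc : ContinuousOn f Ω)
    (ha : ∀ z ∈ Ω \ {z : ℂ | z.im = 0}, DifferentiableAt ℂ f z)
    (a b c d : ℝ) (hsub : [[a, b]] ×ℂ [[c, d]] ⊆ Ω) :
    rectBdry f a b c d = 0 := by
  have key : ∀ c d : ℝ, c ≤ d → ([[a, b]] ×ℂ [[c, d]] ⊆ Ω) → rectBdry f a b c d = 0 := by
    intro c d hcd hsub
    have huIcc : [[c, d]] = Icc c d := uIcc_of_le hcd
    by_cases h0 : c < 0 ∧ 0 < d
    · obtain ⟨hc0, h0d⟩ := h0
      have hmem0 : (0 : ℝ) ∈ [[c, d]] := by rw [huIcc]; exact ⟨hc0.le, h0d.le⟩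
      have hsub1 : [[a, b]] ×ℂ [[c, 0]] ⊆ Ω := fun z hz => hsub
        ⟨hz.1, uIcc_subset_uIcc left_mem_uIcc hmem0 hz.2⟩
      have hsub2 : [[a, b]] ×ℂ [[(0 : ℝ), d]] ⊆ Ω := fun z hz => hsub
        ⟨hz.1, uIcc_subset_uIcc hmem0 right_mem_uIcc hz.2⟩
      have hmema : a ∈ [[a, b]] := left_mem_uIcc
      have hmemb : b ∈ [[a, b]] := right_mem_uIcc
      rw [rectBdry_split f a b c d
        (vseg_integrable f hc a c 0 fun y hy => hsub1 ⟨by simpa using hmema, by simpa using hy⟩)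
        (vseg_integrable f hc a 0 d fun y hy => hsub2 ⟨by simpa using hmema, by simpa using hy⟩)
        (vseg_integrable f hc b c 0 fun y hy => hsub1 ⟨by simpa using hmemb, by simpa using hy⟩)
        (vseg_integrable f hc b 0 d fun y hy => hsub2 ⟨by simpa using hmemb, by simpa using hy⟩)]
      have z1 : rectBdry f a b c 0 = 0 := by
        refine rectBdry_eq_zero_of_off f a b c 0 (hc.mono hsub1) fun x hx => ?_
        have hxim : x.im ∈ Ioo c (0 : ℝ) := by
          simpa [min_eq_left hc0.le, max_eq_right hc0.le] using hx.2
        refine ha x ⟨hsub1 ⟨Ioo_subset_Icc_self hx.1, by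
          rw [uIcc_of_le hc0.le]; exact Ioo_subset_Icc_self hxim⟩, ?_⟩
        · exact ne_of_lt hxim.2
      have z2 : rectBdry f a b 0 d = 0 := by
        refine rectBdry_eq_zero_of_off f a b 0 d (hc.mono hsub2) fun x hx => ?_
        have hxim : x.im ∈ Ioo (0 : ℝ) d := by
          simpa [min_eq_left h0d.le, max_eq_right h0d.le] using hx.2
        refine ha x ⟨hsub2 ⟨Ioo_subset_Icc_self hx.1, by
          rw [uIcc_of_le h0d.le]; exact Ioo_subset_Icc_self hxim⟩, ?_⟩
        · exact (ne_of_gt hxim.1)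
      rw [z1, z2, add_zero]
    · refine rectBdry_eq_zero_of_off f a b c d (hc.mono hsub) fun x hx => ?_
      have hxim : x.im ∈ Ioo c d := by
        simpa [min_eq_left hcd, max_eq_right hcd] using hx.2
      have hne : x.im ≠ 0 := by
        rcases not_and_or.mp h0 with h | h
        · push_neg at h; exact ne_of_gt (lt_of_le_of_lt h hxim.1)
        · push_neg at h; exact ne_of_lt (lt_of_lt_of_le hxim.2 h)
      exact ha x ⟨hsub ⟨Ioo_subset_Icc_self hx.1, by rw [huIcc]; exact Ioo_subset_Icc_self hxim⟩, hne⟩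
  rcases le_total c d with h | h
  · exact key c d h hsub
  · rw [show rectBdry f a b c d = -rectBdry f a b d c from by rw [rectBdry_flip],
      key d c h (by rwa [uIcc_comm d c]), neg_zero]
/-- Gluing principle across the real axis: a function continuous on an open set Ω
and analytic off the real axis is analytic on all of Ω. -/
theorem analytic_of_continuous_of_analyticOff_real
    (Ω : Set ℂ) (hΩ : IsOpen Ω) (f : ℂ → ℂ)
    (hc : ContinuousOn f Ω)
    (ha : ∀ z ∈ Ω \ {z : ℂ | z.im = 0}, DifferentiableAt ℂ f z) :
    ∀ z ∈ Ω, DifferentiableAt ℂ f z := by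
  intro z₀ hz₀
  rcases ne_or_eq z₀.im 0 with him | him
  · exact ha z₀ ⟨hz₀, him⟩
  obtain ⟨ε, hε, hball⟩ := Metric.isOpen_iff.mp hΩ z₀ hz₀
  set δ := ε / 3 with hδdef
  have hδ : 0 < δ := by positivity
  set x₀ := z₀.re with hx₀def
  -- the closed square of radius δ around z₀ lies in Ω
  have hRsub : ∀ z : ℂ, z.re ∈ Icc (x₀ - δ) (x₀ + δ) → z.im ∈ Icc (-δ) δ → z ∈ Ω := by
    intro z h1 h2
    apply hball
    rw [Metric.mem_ball, Complex.dist_eq]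
    have habs : ‖z - z₀‖ ≤ |(z - z₀).re| + |(z - z₀).im| :=
      Complex.norm_le_abs_re_add_abs_im _
    have h1' : |(z - z₀).re| ≤ δ := by
      rw [Complex.sub_re, abs_le]; exact ⟨by linarith [h1.1], by linarith [h1.2]⟩
    have h2' : |(z - z₀).im| ≤ δ := by
      rw [Complex.sub_im, him, sub_zero, abs_le]; exact ⟨h2.1, h2.2⟩
    calc ‖z - z₀‖ ≤ |(z - z₀).re| + |(z - z₀).im| := habs
      _ ≤ δ + δ := add_le_add h1' h2'
      _ < ε := by rw [hδdef]; linarith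
  set Q : Set ℂ := Ioo (x₀ - δ) (x₀ + δ) ×ℂ Ioo (-δ) δ with hQdef
  have hQo : IsOpen Q := IsOpen.reProdIm isOpen_Ioo isOpen_Ioo
  have hz₀Q : z₀ ∈ Q := ⟨⟨by linarith, by linarith⟩, by rw [mem_preimage, him]; exact ⟨by linarith, hδ⟩⟩
  have hQsub : Q ⊆ Ω := fun z hz => hRsub z (Ioo_subset_Icc_self hz.1) (Ioo_subset_Icc_self hz.2)
  have hx₀mem : x₀ ∈ Icc (x₀ - δ) (x₀ + δ) := ⟨by linarith, by linarith⟩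
  have h0mem : (0 : ℝ) ∈ Icc (-δ) δ := ⟨by linarith, hδ.le⟩
  have hrect : ∀ a b c d : ℝ, a ∈ Icc (x₀ - δ) (x₀ + δ) → b ∈ Icc (x₀ - δ) (x₀ + δ) →
      c ∈ Icc (-δ) δ → d ∈ Icc (-δ) δ → ([[a, b]] ×ℂ [[c, d]] : Set ℂ) ⊆ Ω := by
    intro a b c d hA hB hC hD z hz
    exact hRsub z (Icc_subset_Icc (le_min hA.1 hB.1) (max_le hA.2 hB.2) hz.1)
      (Icc_subset_Icc (le_min hC.1 hD.1) (max_le hC.2 hD.2) hz.2)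
  -- horizontal / vertical segment integrability
  have hhint : ∀ a b c : ℝ, a ∈ Icc (x₀ - δ) (x₀ + δ) → b ∈ Icc (x₀ - δ) (x₀ + δ) →
      c ∈ Icc (-δ) δ → IntervalIntegrable (fun x : ℝ => f (x + c * I)) volume a b := by
    intro a b c hA hB hC
    refine hseg_integrable f hc a b c fun x hx => ?_
    exact hrect a b c c hA hB hC hC ⟨by simpa using hx, by simp⟩
  have hvint : ∀ a c d : ℝ, a ∈ Icc (x₀ - δ) (x₀ + δ) → c ∈ Icc (-δ) δ → d ∈ Icc (-δ) δ →
      IntervalIntegrable (fun y : ℝ => f (a + y * I)) volume c d := by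
    intro a c d hA hC hD
    refine vseg_integrable f hc a c d fun y hy => ?_
    exact hrect a a c d hA hA hC hD ⟨by simp, by simpa using hy⟩
  -- the local primitive
  set F : ℂ → ℂ := fun w =>
    (∫ x : ℝ in x₀..w.re, f (x + (0 : ℝ) * I)) +
      I • ∫ y : ℝ in (0 : ℝ)..w.im, f (w.re + y * I) with hFdef
  have key : ∀ w ∈ Q, ∀ w' ∈ Q, F w' - F w =
      (∫ x : ℝ in w.re..w'.re, f (x + w.im * I)) +
        I • ∫ y : ℝ in w.im..w'.im, f (w'.re + y * I) := by
    intro w hw w' hw'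
    have hwre : w.re ∈ Icc (x₀ - δ) (x₀ + δ) := Ioo_subset_Icc_self hw.1
    have hwim : w.im ∈ Icc (-δ) δ := Ioo_subset_Icc_self hw.2
    have hw're : w'.re ∈ Icc (x₀ - δ) (x₀ + δ) := Ioo_subset_Icc_self hw'.1
    have hw'im : w'.im ∈ Icc (-δ) δ := Ioo_subset_Icc_self hw'.2
    have hsplit1 : (∫ x : ℝ in x₀..w.re, f (x + (0 : ℝ) * I)) +
        (∫ x : ℝ in w.re..w'.re, f (x + (0 : ℝ) * I)) =
        ∫ x : ℝ in x₀..w'.re, f (x + (0 : ℝ) * I) :=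
      integral_add_adjacent_intervals (hhint x₀ w.re 0 hx₀mem hwre h0mem)
        (hhint w.re w'.re 0 hwre hw're h0mem)
    have hsplit2 : (∫ y : ℝ in (0 : ℝ)..w.im, f (w'.re + y * I)) +
        (∫ y : ℝ in w.im..w'.im, f (w'.re + y * I)) =
        ∫ y : ℝ in (0 : ℝ)..w'.im, f (w'.re + y * I) :=
      integral_add_adjacent_intervals (hvint w'.re 0 w.im hw're h0mem hwim)
        (hvint w'.re w.im w'.im hw're hwim hw'im)
    have hrect0 : rectBdry f w.re w'.re 0 w.im = 0 :=
      rectBdry_eq_zero Ω hΩ f hc ha _ _ _ _ (hrect _ _ _ _ hwre hw're h0mem hwim)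
    simp only [rectBdry, smul_eq_mul] at hrect0
    simp only [hFdef, smul_eq_mul]
    linear_combination (-1 : ℂ) * hsplit1 - I * hsplit2 + hrect0
  -- F has derivative f at every point of Q
  have hderiv : ∀ w ∈ Q, HasDerivAt F (f w) w := by
    intro w hw
    rw [hasDerivAt_iff_isLittleO, Asymptotics.isLittleO_iff]
    intro c hcpos
    have hwΩ : w ∈ Ω := hQsub hw
    have hcontw : ContinuousAt f w := hc.continuousAt (hΩ.mem_nhds hwΩ)
    obtain ⟨ρ, hρpos, hρ⟩ := Metric.continuousAt_iff.mp hcontw (c / 2) (by positivity)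
    filter_upwards [Metric.ball_mem_nhds w (by positivity : (0 : ℝ) < ρ / 2),
      hQo.mem_nhds hw] with w' hw'ball hw'Q
    have hwre : w.re ∈ Icc (x₀ - δ) (x₀ + δ) := Ioo_subset_Icc_self hw.1
    have hwim : w.im ∈ Icc (-δ) δ := Ioo_subset_Icc_self hw.2
    have hw're : w'.re ∈ Icc (x₀ - δ) (x₀ + δ) := Ioo_subset_Icc_self hw'Q.1
    have hw'im : w'.im ∈ Icc (-δ) δ := Ioo_subset_Icc_self hw'Q.2
    have hdist : dist w' w < ρ / 2 := by simpa [Metric.mem_ball] using hw'ball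
    have hnorm : ‖w' - w‖ < ρ / 2 := by rwa [← dist_eq_norm]
    have hre_le : |w'.re - w.re| ≤ ‖w' - w‖ := by
      simpa [Complex.sub_re] using Complex.abs_re_le_norm (w' - w)
    have him_le : |w'.im - w.im| ≤ ‖w' - w‖ := by
      simpa [Complex.sub_im] using Complex.abs_im_le_norm (w' - w)
    -- first integral bound
    have hb1 : ‖∫ x : ℝ in w.re..w'.re, (f (x + w.im * I) - f w)‖ ≤ c / 2 * |w'.re - w.re| := by
      refine intervalIntegral.norm_integral_le_of_norm_le_const fun x hx => ?_
      have hx' : x ∈ [[w.re, w'.re]] := uIoc_subset_uIcc hx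
      have hxd : |x - w.re| ≤ |w'.re - w.re| := abs_sub_left_of_mem_uIcc hx'
      have : dist ((x : ℂ) + w.im * I) w < ρ := by
        rw [Complex.dist_eq]
        have : ((x : ℂ) + w.im * I) - w = ((x - w.re : ℝ) : ℂ) := by
          apply Complex.ext <;> simp
        rw [this]
        calc ‖((x - w.re : ℝ) : ℂ)‖ = |x - w.re| := by rw [Complex.norm_real, Real.norm_eq_abs]
          _ ≤ |w'.re - w.re| := hxd
          _ ≤ ‖w' - w‖ := hre_le
          _ < ρ := by linarith
      rw [← dist_eq_norm]; exact (hρ this).le.trans_eq rfl |>.trans le_rfl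
    -- second integral bound
    have hb2 : ‖∫ y : ℝ in w.im..w'.im, (f (w'.re + y * I) - f w)‖ ≤ c / 2 * |w'.im - w.im| := by
      refine intervalIntegral.norm_integral_le_of_norm_le_const fun y hy => ?_
      have hy' : y ∈ [[w.im, w'.im]] := uIoc_subset_uIcc hy
      have hyd : |y - w.im| ≤ |w'.im - w.im| := abs_sub_left_of_mem_uIcc hy'
      have : dist ((w'.re : ℂ) + y * I) w < ρ := by
        rw [Complex.dist_eq]
        have he : ((w'.re : ℂ) + y * I) - w = ((w'.re - w.re : ℝ) : ℂ) + ((y - w.im : ℝ) : ℂ) * I := by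
          apply Complex.ext <;> simp
        rw [he]
        calc ‖((w'.re - w.re : ℝ) : ℂ) + ((y - w.im : ℝ) : ℂ) * I‖
            ≤ ‖((w'.re - w.re : ℝ) : ℂ)‖ + ‖((y - w.im : ℝ) : ℂ) * I‖ :=
              norm_add_le _ _
          _ = |w'.re - w.re| + |y - w.im| := by
              rw [norm_mul, Complex.norm_I, mul_one, Complex.norm_real, Complex.norm_real, Real.norm_eq_abs,
                  Real.norm_eq_abs]
          _ ≤ ‖w' - w‖ + |w'.im - w.im| := add_le_add hre_le hyd
          _ ≤ ‖w' - w‖ + ‖w' - w‖ := add_le_add le_rfl him_le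
          _ < ρ := by linarith
      rw [← dist_eq_norm]; exact (hρ this).le
    -- rewrite the difference
    have hint1 : IntervalIntegrable (fun x : ℝ => f (x + w.im * I)) volume w.re w'.re :=
      hhint w.re w'.re w.im hwre hw're hwim
    have hint2 : IntervalIntegrable (fun y : ℝ => f (w'.re + y * I)) volume w.im w'.im :=
      hvint w'.re w.im w'.im hw're hwim hw'im
    have e1 : (∫ x : ℝ in w.re..w'.re, (f (x + w.im * I) - f w)) =
        (∫ x : ℝ in w.re..w'.re, f (x + w.im * I)) - (w'.re - w.re) • f w := by
      rw [intervalIntegral.integral_sub hint1 intervalIntegrable_const,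
        intervalIntegral.integral_const]
    have e2 : (∫ y : ℝ in w.im..w'.im, (f (w'.re + y * I) - f w)) =
        (∫ y : ℝ in w.im..w'.im, f (w'.re + y * I)) - (w'.im - w.im) • f w := by
      rw [intervalIntegral.integral_sub hint2 intervalIntegrable_const,
        intervalIntegral.integral_const]
    have hdiff : F w' - F w - (w' - w) • f w =
        (∫ x : ℝ in w.re..w'.re, (f (x + w.im * I) - f w)) +
          I * ∫ y : ℝ in w.im..w'.im, (f (w'.re + y * I) - f w) := by
      rw [key w hw w' hw'Q, e1, e2]
      simp only [smul_eq_mul, Complex.real_smul]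
      have hww' : (w' - w : ℂ) = ((w'.re - w.re : ℝ) : ℂ) + ((w'.im - w.im : ℝ) : ℂ) * I := by
        apply Complex.ext <;> simp
      rw [hww']
      push_cast
      ring
    rw [hdiff]
    calc ‖(∫ x : ℝ in w.re..w'.re, (f (x + w.im * I) - f w)) +
          I * ∫ y : ℝ in w.im..w'.im, (f (w'.re + y * I) - f w)‖
        ≤ ‖∫ x : ℝ in w.re..w'.re, (f (x + w.im * I) - f w)‖ +
          ‖I * ∫ y : ℝ in w.im..w'.im, (f (w'.re + y * I) - f w)‖ := norm_add_le _ _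
      _ = ‖∫ x : ℝ in w.re..w'.re, (f (x + w.im * I) - f w)‖ +
          ‖∫ y : ℝ in w.im..w'.im, (f (w'.re + y * I) - f w)‖ := by
          rw [norm_mul, Complex.norm_I, one_mul]
      _ ≤ c / 2 * |w'.re - w.re| + c / 2 * |w'.im - w.im| := add_le_add hb1 hb2
      _ ≤ c / 2 * ‖w' - w‖ + c / 2 * ‖w' - w‖ := by
          have := hre_le; have := him_le
          gcongr
      _ = c * ‖w' - w‖ := by ring
  -- conclude
  have hFdiff : DifferentiableOn ℂ F Q := fun w hw =>
    ((hderiv w hw).differentiableAt).differentiableWithinAt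
  have han : AnalyticOnNhd ℂ F Q := hFdiff.analyticOnNhd hQo
  have hderivan : AnalyticOnNhd ℂ (deriv F) Q := han.deriv
  have heq : f =ᶠ[nhds z₀] deriv F := by
    filter_upwards [hQo.mem_nhds hz₀Q] with w hw
    exact ((hderiv w hw).deriv).symm
  exact ((hderivan z₀ hz₀Q).differentiableAt).congr_of_eventuallyEq heq
end

section
/- Let I ⊆ ℝ be a nonempty open interval, let V ⊆ ℂ be an open set containing I, and let γ : ℂ → ℂ be analytic and injective on V with nonvanishing derivative on V, and let Γ = γ(I) be the resulting analytic arc. Let Ω ⊆ ℂ be open with Γ ⊆ Ω, and let f : ℂ → ℂ be continuous on Ω and analytic on Ω \ Γ. Then f is analytic on all of Ω. -/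
open Set Complex intervalIntegral MeasureTheory
open scoped Interval Topology



/-- Rectangle Cauchy–Goursat allowing non-differentiability on the real axis,
provided `f` is continuous on the closed rectangle. -/
theorem rect_integral_zero_off_line (f : ℂ → ℂ) (z w : ℂ)
    (Hc : ContinuousOn f (Set.uIcc z.re w.re ×ℂ Set.uIcc z.im w.im))
    (Hd : ∀ x ∈ (Ioo (min z.re w.re) (max z.re w.re) ×ℂ
        Ioo (min z.im w.im) (max z.im w.im)), x.im ≠ 0 → DifferentiableAt ℂ f x) :
    (∫ x : ℝ in z.re..w.re, f (x + z.im * I)) - (∫ x : ℝ in z.re..w.re, f (x + w.im * I)) +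
      I • (∫ y : ℝ in z.im..w.im, f (w.re + y * I)) -
      I • (∫ y : ℝ in z.im..w.im, f (z.re + y * I)) = 0 := by
  set m := min z.im w.im with hm
  set M := max z.im w.im with hM
  set t : ℝ := max m (min M 0) with ht
  have hmM : m ≤ M := min_le_max
  have htmem : t ∈ Icc m M := ⟨le_max_left _ _, max_le hmM (min_le_left _ _)⟩
  have ht0 : m ≤ 0 → 0 ≤ M → t = 0 := fun h1 h2 => by
    rw [ht, min_eq_right h2, max_eq_right h1]
  have hzmem : z.im ∈ Icc m M := ⟨min_le_left _ _, le_max_left _ _⟩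
  have hwmem : w.im ∈ Icc m M := ⟨min_le_right _ _, le_max_right _ _⟩
  have hsub : ∀ a b : ℝ, a ∈ Icc m M → b ∈ Icc m M →
      Set.uIcc a b ⊆ Set.uIcc z.im w.im := by
    intro a b haa hbb y hy
    rw [Set.uIcc, Set.mem_Icc] at hy ⊢
    constructor
    · exact le_trans (le_inf haa.1 hbb.1) hy.1
    · exact le_trans hy.2 (sup_le haa.2 hbb.2)
  have hsub1 := hsub z.im t hzmem htmem
  have hsub2 := hsub t w.im htmem hwmem
  have key1 : ∀ y : ℝ, y ∈ Ioo (min z.im t) (max z.im t) → y ≠ 0 := by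
    intro y hy h0
    subst h0
    have h1 : m ≤ 0 := le_trans (le_min hzmem.1 htmem.1) (le_of_lt hy.1)
    have h2 : (0:ℝ) ≤ M := le_trans (le_of_lt hy.2) (max_le hzmem.2 htmem.2)
    rw [ht0 h1 h2] at hy
    rcases min_lt_iff.1 hy.1 with h | h
    · rcases lt_max_iff.1 hy.2 with h' | h' <;> linarith
    · linarith
  have key2 : ∀ y : ℝ, y ∈ Ioo (min t w.im) (max t w.im) → y ≠ 0 := by
    intro y hy h0
    subst h0
    have h1 : m ≤ 0 := le_trans (le_min htmem.1 hwmem.1) (le_of_lt hy.1)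
    have h2 : (0:ℝ) ≤ M := le_trans (le_of_lt hy.2) (max_le htmem.2 hwmem.2)
    rw [ht0 h1 h2] at hy
    rcases min_lt_iff.1 hy.1 with h | h
    · linarith
    · rcases lt_max_iff.1 hy.2 with h' | h' <;> linarith
  -- first sub-rectangle: corners z and (w.re + t*I)
  have h1 : (∫ x : ℝ in z.re..w.re, f (x + z.im * I)) - (∫ x : ℝ in z.re..w.re, f (x + t * I)) +
      I • (∫ y : ℝ in z.im..t, f (w.re + y * I)) -
      I • (∫ y : ℝ in z.im..t, f (z.re + y * I)) = 0 := by
    have h := Complex.integral_boundary_rect_eq_zero_of_differentiable_on_off_countable f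
      z (w.re + t * I) ∅ Set.countable_empty ?_ ?_
    · simpa using h
    · simp only [add_re, add_im, ofReal_re, ofReal_im, mul_re, mul_im, I_re, I_im,
        mul_zero, mul_one, zero_mul, zero_sub, neg_zero, sub_zero, zero_add, add_zero]
      exact Hc.mono fun p hp => ⟨hp.1, hsub1 hp.2⟩
    · intro x hx
      simp only [add_re, add_im, ofReal_re, ofReal_im, mul_re, mul_im, I_re, I_im,
        mul_zero, mul_one, zero_mul, zero_sub, neg_zero, sub_zero, zero_add, add_zero,
        mem_diff, mem_empty_iff_false, not_false_iff, and_true] at hx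
      refine Hd x ⟨hx.1, ?_, ?_⟩ (key1 x.im hx.2)
      · exact lt_of_le_of_lt (le_min hzmem.1 htmem.1) hx.2.1
      · exact lt_of_lt_of_le hx.2.2 (max_le hzmem.2 htmem.2)
  -- second sub-rectangle: corners (z.re + t*I) and w
  have h2 : (∫ x : ℝ in z.re..w.re, f (x + t * I)) - (∫ x : ℝ in z.re..w.re, f (x + w.im * I)) +
      I • (∫ y : ℝ in t..w.im, f (w.re + y * I)) -
      I • (∫ y : ℝ in t..w.im, f (z.re + y * I)) = 0 := by
    have h := Complex.integral_boundary_rect_eq_zero_of_differentiable_on_off_countable f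
      (z.re + t * I) w ∅ Set.countable_empty ?_ ?_
    · simpa using h
    · simp only [add_re, add_im, ofReal_re, ofReal_im, mul_re, mul_im, I_re, I_im,
        mul_zero, mul_one, zero_mul, zero_sub, neg_zero, sub_zero, zero_add, add_zero]
      exact Hc.mono fun p hp => ⟨hp.1, hsub2 hp.2⟩
    · intro x hx
      simp only [add_re, add_im, ofReal_re, ofReal_im, mul_re, mul_im, I_re, I_im,
        mul_zero, mul_one, zero_mul, zero_sub, neg_zero, sub_zero, zero_add, add_zero,
        mem_diff, mem_empty_iff_false, not_false_iff, and_true] at hx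
      refine Hd x ⟨hx.1, ?_, ?_⟩ (key2 x.im hx.2)
      · exact lt_of_le_of_lt (le_min htmem.1 hwmem.1) hx.2.1
      · exact lt_of_lt_of_le hx.2.2 (max_le htmem.2 hwmem.2)
  -- glue the vertical integrals
  have hvert : ∀ c : ℝ, c ∈ Set.uIcc z.re w.re →
      (∫ y : ℝ in z.im..t, f (c + y * I)) + (∫ y : ℝ in t..w.im, f (c + y * I)) =
      ∫ y : ℝ in z.im..w.im, f (c + y * I) := by
    intro c hc
    have hcont : Continuous fun y : ℝ => (c : ℂ) + y * I :=
      continuous_const.add (Complex.continuous_ofReal.mul continuous_const)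
    apply intervalIntegral.integral_add_adjacent_intervals
    · apply ContinuousOn.intervalIntegrable
      apply Hc.comp hcont.continuousOn
      intro y hy
      exact ⟨by simpa using hc, by simpa using hsub1 hy⟩
    · apply ContinuousOn.intervalIntegrable
      apply Hc.comp hcont.continuousOn
      intro y hy
      exact ⟨by simpa using hc, by simpa using hsub2 hy⟩
  have e1 := hvert w.re right_mem_uIcc
  have e2 := hvert z.re left_mem_uIcc
  rw [← e1, ← e2]
  simp only [smul_eq_mul] at h1 h2 ⊢
  linear_combination h1 + h2




theorem differentiableAt_of_continuousOn_off_line {U : Set ℂ} (hU : IsOpen U) {f : ℂ → ℂ}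
    (hc : ContinuousOn f U)
    (hd : ∀ z ∈ U, z.im ≠ 0 → DifferentiableAt ℂ f z) :
    ∀ z ∈ U, DifferentiableAt ℂ f z := by
  intro z₀ hz₀
  by_cases him : z₀.im ≠ 0
  · exact hd z₀ hz₀ him
  push_neg at him
  obtain ⟨ε₀, hε₀, hball⟩ := Metric.isOpen_iff.1 hU z₀ hz₀
  set r := ε₀ / 3 with hrdef
  have hr : 0 < r := by positivity
  set aL := z₀.re - r with haL
  set aR := z₀.re + r with haR
  set bL := z₀.im - r with hbL
  set bR := z₀.im + r with hbR
  set R : Set ℂ := Ioo aL aR ×ℂ Ioo bL bR with hR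
  have hRopen : IsOpen R := IsOpen.reProdIm isOpen_Ioo isOpen_Ioo
  have hz₀R : z₀ ∈ R := by
    rw [hR, Complex.mem_reProdIm]
    refine ⟨⟨?_, ?_⟩, ?_, ?_⟩ <;> simp [haL, haR, hbL, hbR] <;> linarith
  have hRU : ∀ p : ℂ, p.re ∈ Icc aL aR → p.im ∈ Icc bL bR → p ∈ U := by
    intro p h1 h2
    apply hball
    rw [Metric.mem_ball, Complex.dist_eq]
    calc ‖p - z₀‖ ≤ |(p - z₀).re| + |(p - z₀).im| :=
          Complex.norm_le_abs_re_add_abs_im _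
      _ ≤ r + r := by
          rw [Complex.sub_re, Complex.sub_im]
          gcongr
          · rw [abs_le]; constructor
            · simp only [haL] at h1; linarith [h1.1]
            · simp only [haR] at h1; linarith [h1.2]
          · rw [abs_le]; constructor
            · simp only [hbL] at h2; linarith [h2.1]
            · simp only [hbR] at h2; linarith [h2.2]
      _ < ε₀ := by rw [hrdef]; linarith
  have hW : ∀ a b lo hi y : ℝ, a ∈ Icc lo hi → b ∈ Icc lo hi →
      min a b ≤ y → y ≤ max a b → y ∈ Icc lo hi := by
    intro a b lo hi y ha hb h1 h2
    exact ⟨le_trans (le_min ha.1 hb.1) h1, le_trans h2 (max_le ha.2 hb.2)⟩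
  have hWu : ∀ a b lo hi y : ℝ, a ∈ Icc lo hi → b ∈ Icc lo hi →
      y ∈ Set.uIcc a b → y ∈ Icc lo hi := by
    intro a b lo hi y ha hb hy
    rw [Set.uIcc, Set.mem_Icc] at hy
    exact hW a b lo hi y ha hb hy.1 hy.2
  -- integrability on horizontal and vertical segments inside the rectangle
  have hint_h : ∀ a b c : ℝ, a ∈ Icc aL aR → b ∈ Icc aL aR → c ∈ Icc bL bR →
      IntervalIntegrable (fun x : ℝ => f (x + c * I)) volume a b := by
    intro a b c ha hb hcc
    apply ContinuousOn.intervalIntegrable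
    apply hc.comp (Continuous.continuousOn (by fun_prop))
    intro x hx
    exact hRU _ (by simpa using hWu a b _ _ _ ha hb hx) (by simpa using hcc)
  have hint_v : ∀ c a b : ℝ, c ∈ Icc aL aR → a ∈ Icc bL bR → b ∈ Icc bL bR →
      IntervalIntegrable (fun y : ℝ => f (c + y * I)) volume a b := by
    intro c a b hcc ha hb
    apply ContinuousOn.intervalIntegrable
    apply hc.comp (Continuous.continuousOn (by fun_prop))
    intro y hy
    exact hRU _ (by simpa using hcc) (by simpa using hWu a b _ _ _ ha hb hy)
  -- the primitive
  set F : ℂ → ℂ := fun w =>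
    (∫ x : ℝ in z₀.re..w.re, f (x + z₀.im * I)) +
      I * ∫ y : ℝ in z₀.im..w.im, f (w.re + y * I) with hF
  have hmemIcc : ∀ w : ℂ, w ∈ R → w.re ∈ Icc aL aR ∧ w.im ∈ Icc bL bR := by
    intro w hw
    rw [hR, Complex.mem_reProdIm] at hw
    exact ⟨Ioo_subset_Icc_self hw.1, Ioo_subset_Icc_self hw.2⟩
  have hz₀Icc := hmemIcc z₀ hz₀R
  -- difference formula
  have hdiff : ∀ w ∈ R, ∀ w' ∈ R, F w' - F w =
      (∫ x : ℝ in w.re..w'.re, f (x + w.im * I)) +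
        I * ∫ y : ℝ in w.im..w'.im, f (w'.re + y * I) := by
    intro w hw w' hw'
    obtain ⟨hwre, hwim⟩ := hmemIcc w hw
    obtain ⟨hw're, hw'im⟩ := hmemIcc w' hw'
    have hrect := rect_integral_zero_off_line f (w.re + z₀.im * I) (w'.re + w.im * I) ?_ ?_
    rotate_left
    · simp only [add_re, add_im, ofReal_re, ofReal_im, mul_re, mul_im, I_re, I_im,
        mul_zero, mul_one, zero_mul, zero_sub, neg_zero, sub_zero, zero_add, add_zero]
      apply hc.mono
      intro p hp
      rw [Complex.mem_reProdIm] at hp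
      exact hRU p (hWu _ _ _ _ _ hwre hw're hp.1) (hWu _ _ _ _ _ hz₀Icc.2 hwim hp.2)
    · intro x hx hxim
      simp only [add_re, add_im, ofReal_re, ofReal_im, mul_re, mul_im, I_re, I_im,
        mul_zero, mul_one, zero_mul, zero_sub, neg_zero, sub_zero, zero_add, add_zero] at hx
      rw [Complex.mem_reProdIm] at hx
      refine hd x (hRU x ?_ ?_) hxim
      · exact hW _ _ _ _ _ hwre hw're hx.1.1.le hx.1.2.le
      · exact hW _ _ _ _ _ hz₀Icc.2 hwim hx.2.1.le hx.2.2.le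
    simp only [add_re, add_im, ofReal_re, ofReal_im, mul_re, mul_im, I_re, I_im,
      mul_zero, mul_one, zero_mul, zero_sub, neg_zero, sub_zero, zero_add, add_zero,
      smul_eq_mul] at hrect
    have hadd1 : (∫ x : ℝ in z₀.re..w.re, f (x + z₀.im * I)) +
        (∫ x : ℝ in w.re..w'.re, f (x + z₀.im * I)) =
        ∫ x : ℝ in z₀.re..w'.re, f (x + z₀.im * I) :=
      intervalIntegral.integral_add_adjacent_intervals
        (hint_h _ _ _ hz₀Icc.1 hwre hz₀Icc.2) (hint_h _ _ _ hwre hw're hz₀Icc.2)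
    have hadd2 : (∫ y : ℝ in z₀.im..w.im, f (w'.re + y * I)) +
        (∫ y : ℝ in w.im..w'.im, f (w'.re + y * I)) =
        ∫ y : ℝ in z₀.im..w'.im, f (w'.re + y * I) :=
      intervalIntegral.integral_add_adjacent_intervals
        (hint_v _ _ _ hw're hz₀Icc.2 hwim) (hint_v _ _ _ hw're hwim hw'im)
    simp only [hF]
    linear_combination (-1 : ℂ) * hadd1 - I * hadd2 + hrect
  -- F has derivative f w at each w ∈ R
  have hderiv : ∀ w ∈ R, HasDerivAt F (f w) w := by
    intro w hw
    obtain ⟨hwre, hwim⟩ := hmemIcc w hw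
    have hwU : w ∈ U := hRU w hwre hwim
    rw [hasDerivAt_iff_tendsto]
    rw [Metric.tendsto_nhds]
    intro ε hε
    have hfc : ContinuousAt f w := hc.continuousAt (hU.mem_nhds hwU)
    obtain ⟨δ, hδ, hδf⟩ := Metric.continuousAt_iff.1 hfc (ε / 4) (by positivity)
    obtain ⟨ρ, hρ, hρR⟩ := Metric.isOpen_iff.1 hRopen w hw
    set δ' := min (δ / 2) ρ with hδ'
    have hδ'pos : 0 < δ' := lt_min (by positivity) hρ
    filter_upwards [Metric.ball_mem_nhds w hδ'pos] with w' hw'ball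
    have hw'R : w' ∈ R := hρR (Metric.ball_subset_ball (min_le_right _ _) hw'ball)
    obtain ⟨hw're, hw'im⟩ := hmemIcc w' hw'R
    by_cases hww : w' = w
    · subst hww
      simp [hε]
    have hne : w' - w ≠ 0 := sub_ne_zero.2 hww
    have hnorm : (0:ℝ) < ‖w' - w‖ := norm_pos_iff.2 hne
    have hd1 : dist w' w < δ' := by rwa [Metric.mem_ball] at hw'ball
    -- bound for points on the horizontal segment
    have habs : ∀ a b x : ℝ, x ∈ Set.uIoc a b → |x - a| ≤ |b - a| := by
      intro a b x hx
      rcases Set.mem_uIoc.1 hx with ⟨h1, h2⟩ | ⟨h1, h2⟩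
      · rw [_root_.abs_of_nonneg (by linarith), _root_.abs_of_nonneg (by linarith)]; linarith
      · rw [_root_.abs_of_nonpos (by linarith), _root_.abs_of_nonpos (by linarith)]; linarith
    have hrebound : |w'.re - w.re| ≤ ‖w' - w‖ := by
      have := Complex.abs_re_le_norm (w' - w)
      rwa [Complex.sub_re] at this
    have himbound : |w'.im - w.im| ≤ ‖w' - w‖ := by
      have := Complex.abs_im_le_norm (w' - w)
      rwa [Complex.sub_im] at this
    have hnormd : ‖w' - w‖ < δ' := by rwa [dist_eq_norm] at hd1
    have hb1 : ∀ x ∈ Set.uIoc w.re w'.re, ‖f (↑x + ↑w.im * I) - f w‖ ≤ ε / 4 := by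
      intro x hx
      apply le_of_lt
      rw [← dist_eq_norm]
      apply hδf
      rw [Complex.dist_eq]
      have : (↑x + ↑w.im * I) - w = ((x - w.re : ℝ) : ℂ) + 0 * I := by
        apply Complex.ext <;> simp
      rw [this]
      simp only [zero_mul, add_zero, Complex.norm_real]
      calc |x - w.re| ≤ |w'.re - w.re| := habs _ _ _ hx
        _ ≤ ‖w' - w‖ := hrebound
        _ < δ' := hnormd
        _ ≤ δ := le_trans (min_le_left _ _) (by linarith)
    have hb2 : ∀ y ∈ Set.uIoc w.im w'.im, ‖f (↑w'.re + ↑y * I) - f w‖ ≤ ε / 4 := by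
      intro y hy
      apply le_of_lt
      rw [← dist_eq_norm]
      apply hδf
      rw [Complex.dist_eq]
      calc ‖(↑w'.re + ↑y * I) - w‖
          ≤ |((↑w'.re + ↑y * I) - w).re| + |((↑w'.re + ↑y * I) - w).im| :=
            Complex.norm_le_abs_re_add_abs_im _
        _ = |w'.re - w.re| + |y - w.im| := by
            simp [Complex.sub_re, Complex.sub_im]
        _ ≤ ‖w' - w‖ + |w'.im - w.im| := add_le_add hrebound (habs _ _ _ hy)
        _ ≤ ‖w' - w‖ + ‖w' - w‖ := add_le_add le_rfl himbound
        _ < δ' + δ' := add_lt_add hnormd hnormd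
        _ ≤ δ := by
            have h := min_le_left (δ / 2) ρ
            simp only [hδ']
            linarith
    -- compute the error term
    have hEeq : F w' - F w - (w' - w) • f w =
        (∫ x : ℝ in w.re..w'.re, (f (↑x + ↑w.im * I) - f w)) +
          I * ∫ y : ℝ in w.im..w'.im, (f (↑w'.re + ↑y * I) - f w) := by
      rw [hdiff w hw w' hw'R]
      rw [intervalIntegral.integral_sub (hint_h _ _ _ hwre hw're hwim)
        intervalIntegrable_const]
      rw [intervalIntegral.integral_sub (hint_v _ _ _ hw're hwim hw'im)
        intervalIntegrable_const]
      rw [intervalIntegral.integral_const, intervalIntegral.integral_const]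
      have hww' : w' - w = ((w'.re - w.re : ℝ) : ℂ) + ((w'.im - w.im : ℝ) : ℂ) * I := by
        apply Complex.ext <;> simp
      rw [smul_eq_mul, hww']
      simp only [Complex.real_smul]
      push_cast
      ring
    have hEbound : ‖F w' - F w - (w' - w) • f w‖ ≤ ε / 2 * ‖w' - w‖ := by
      rw [hEeq]
      calc ‖(∫ x : ℝ in w.re..w'.re, (f (↑x + ↑w.im * I) - f w)) +
            I * ∫ y : ℝ in w.im..w'.im, (f (↑w'.re + ↑y * I) - f w)‖
          ≤ ‖∫ x : ℝ in w.re..w'.re, (f (↑x + ↑w.im * I) - f w)‖ +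
            ‖I * ∫ y : ℝ in w.im..w'.im, (f (↑w'.re + ↑y * I) - f w)‖ := norm_add_le _ _
        _ ≤ ε / 4 * |w'.re - w.re| + ε / 4 * |w'.im - w.im| := by
            gcongr
            · exact intervalIntegral.norm_integral_le_of_norm_le_const hb1
            · rw [norm_mul, Complex.norm_I, one_mul]
              exact intervalIntegral.norm_integral_le_of_norm_le_const hb2
        _ ≤ ε / 4 * ‖w' - w‖ + ε / 4 * ‖w' - w‖ :=
            add_le_add (mul_le_mul_of_nonneg_left hrebound (by positivity))
              (mul_le_mul_of_nonneg_left himbound (by positivity))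
        _ = ε / 2 * ‖w' - w‖ := by ring
    rw [Real.dist_0_eq_abs, _root_.abs_of_nonneg (by positivity)]
    calc ‖w' - w‖⁻¹ * ‖F w' - F w - (w' - w) • f w‖
        ≤ ‖w' - w‖⁻¹ * (ε / 2 * ‖w' - w‖) := by gcongr
      _ = ε / 2 := by
          rw [mul_comm (ε / 2), ← mul_assoc, inv_mul_cancel₀ (ne_of_gt hnorm), one_mul]
      _ < ε := by linarith
  -- conclude
  have hFd : DifferentiableOn ℂ F R :=
    fun w hw => ((hderiv w hw).differentiableAt).differentiableWithinAt
  have hFan : AnalyticOnNhd ℂ F R := hFd.analyticOnNhd hRopen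
  have hDF : DifferentiableAt ℂ (deriv F) z₀ :=
    ((AnalyticOnNhd.deriv hFan z₀ hz₀R).differentiableAt)
  have hev : f =ᶠ[𝓝 z₀] deriv F := by
    filter_upwards [hRopen.mem_nhds hz₀R] with w hw
    exact ((hderiv w hw).deriv).symm
  exact (hev.differentiableAt_iff).2 hDF


/-- Gluing principle across an analytic arc: a function continuous on an open set Ω
containing an analytic arc Γ and analytic on Ω \ Γ is analytic on all of Ω. -/
theorem analytic_of_continuous_of_analyticOff_arc
    (I : Set ℝ) (hIne : I.Nonempty) (hIopen : IsOpen I) (hIconn : I.OrdConnected)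
    (V : Set ℂ) (hV : IsOpen V) (hIV : (Complex.ofReal '' I) ⊆ V)
    (γ : ℂ → ℂ) (hγdiff : ∀ z ∈ V, DifferentiableAt ℂ γ z)
    (hγinj : Set.InjOn γ V) (hγderiv : ∀ z ∈ V, deriv γ z ≠ 0)
    (Γ : Set ℂ) (hΓ : Γ = γ '' (Complex.ofReal '' I))
    (Ω : Set ℂ) (hΩ : IsOpen Ω) (hΓΩ : Γ ⊆ Ω)
    (f : ℂ → ℂ) (hc : ContinuousOn f Ω)
    (ha : ∀ z ∈ Ω \ Γ, DifferentiableAt ℂ f z) :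
    ∀ z ∈ Ω, DifferentiableAt ℂ f z := by
  intro z hz
  by_cases hzΓ : z ∈ Γ
  swap
  · exact ha z ⟨hz, hzΓ⟩
  have hzΓ' := hzΓ
  rw [hΓ] at hzΓ'
  obtain ⟨c, hcI, rfl⟩ := hzΓ'
  have hcV : c ∈ V := hIV hcI
  obtain ⟨x, hxI, rfl⟩ := hcI
  -- γ is analytic at ↑x with nonvanishing derivative, so it has a local inverse
  have hana : AnalyticAt ℂ γ ((x : ℝ) : ℂ) :=
    DifferentiableOn.analyticAt
      (fun u hu => (hγdiff u hu).differentiableWithinAt) (hV.mem_nhds hcV)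
  obtain ⟨p, hp⟩ := hana
  have hsd : HasStrictDerivAt γ (deriv γ ((x : ℝ) : ℂ)) ((x : ℝ) : ℂ) := by
    have h := hp.hasStrictDerivAt
    rwa [h.hasDerivAt.deriv]
  have hne : deriv γ ((x : ℝ) : ℂ) ≠ 0 := hγderiv _ hcV
  set e := hsd.hasStrictFDerivAt_equiv hne with he
  set g : ℂ → ℂ := e.localInverse γ _ _ with hg
  -- the open set W on which we consider f ∘ γ
  set W : Set ℂ := V ∩ γ ⁻¹' Ω with hW
  have hWopen : IsOpen W := by
    rw [isOpen_iff_mem_nhds]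
    intro u hu
    exact Filter.inter_mem (hV.mem_nhds hu.1)
      ((hγdiff u hu.1).continuousAt.preimage_mem_nhds (hΩ.mem_nhds hu.2))
  have hcW : ((x : ℝ) : ℂ) ∈ W := ⟨hcV, hz⟩
  have hcont : ContinuousOn (f ∘ γ) W :=
    hc.comp (fun u hu => (hγdiff u hu.1).continuousAt.continuousWithinAt)
      (fun u hu => hu.2)
  have hnotΓ : ∀ u ∈ W, u.im ≠ 0 → γ u ∉ Γ := by
    intro u hu him hmem
    rw [hΓ] at hmem
    obtain ⟨c', hc', heq⟩ := hmem
    obtain ⟨x', _, rfl⟩ := hc'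
    have : u = ((x' : ℝ) : ℂ) := hγinj hu.1 (hIV ⟨x', ‹x' ∈ I›, rfl⟩) heq.symm
    rw [this] at him
    exact him (Complex.ofReal_im x')
  have hdiffW : ∀ u ∈ W, u.im ≠ 0 → DifferentiableAt ℂ (f ∘ γ) u := fun u hu him =>
    (ha (γ u) ⟨hu.2, hnotΓ u hu him⟩).comp u (hγdiff u hu.1)
  -- glue across the real line
  have hgc : DifferentiableAt ℂ (f ∘ γ) ((x : ℝ) : ℂ) :=
    differentiableAt_of_continuousOn_off_line hWopen hcont hdiffW _ hcW
  -- transfer back through the local inverse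
  have hgdiff : DifferentiableAt ℂ g (γ ((x : ℝ) : ℂ)) :=
    e.to_localInverse.differentiableAt
  have h1 : g (γ ((x : ℝ) : ℂ)) = ((x : ℝ) : ℂ) := e.localInverse_apply_image
  have hcomp : DifferentiableAt ℂ ((f ∘ γ) ∘ g) (γ ((x : ℝ) : ℂ)) :=
    DifferentiableAt.comp _ (by rw [h1]; exact hgc) hgdiff
  have heq : f =ᶠ[nhds (γ ((x : ℝ) : ℂ))] (f ∘ γ) ∘ g := by
    filter_upwards [e.eventually_right_inverse] with y hy
    simp only [Function.comp_apply, hg, hy]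
  exact (heq.differentiableAt_iff).2 hcomp
end

section
/- Let Γ ⊆ ℂ be a set having a point that is an accumulation point of Γ, let Ω ⊆ ℂ be a connected open set containing Γ, and let S : ℂ → ℂ be analytic on Ω with S(z) = conj z for every z ∈ Γ. Suppose moreover that conj(S(Ω)) ⊆ Ω. Then conj(S(conj(S(z)))) = z for every z ∈ Ω; that is, the map z ↦ conj(S(z)) is an involution on Ω. -/
open Complex Filter Topology

private lemma conj_comp_hasDerivAt {S : ℂ → ℂ} {w d : ℂ}
    (h : HasDerivAt S d (starRingEnd ℂ w)) :
    HasDerivAt (fun u => starRingEnd ℂ (S (starRingEnd ℂ u))) (starRingEnd ℂ d) w := by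
  rw [hasDerivAt_iff_tendsto_slope] at h ⊢
  have hmap : Filter.map (starRingEnd ℂ) (𝓝[≠] w) = 𝓝[≠] (starRingEnd ℂ w) := by
    exact Complex.conjCLE.toHomeomorph.map_punctured_nhds_eq w
  have hc : Tendsto (starRingEnd ℂ) (𝓝[≠] w) (𝓝[≠] (starRingEnd ℂ w)) := hmap ▸ tendsto_map
  have h1 : Tendsto (fun u => slope S (starRingEnd ℂ w) (starRingEnd ℂ u)) (𝓝[≠] w) (𝓝 d) :=
    h.comp hc
  have h2 : Tendsto (fun u => starRingEnd ℂ (slope S (starRingEnd ℂ w) (starRingEnd ℂ u)))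
      (𝓝[≠] w) (𝓝 (starRingEnd ℂ d)) :=
    (Complex.continuous_conj.tendsto d).comp h1
  refine h2.congr fun u => ?_
  simp [slope_def_field, map_div₀, map_sub]

/-- The reflection z ↦ conj (S z) associated with a Schwarz function S of Γ is an
involution on a connected open set Ω containing Γ, provided conj(S(Ω)) ⊆ Ω. -/
theorem schwarz_reflection_involution
    (Γ Ω : Set ℂ) (hΩopen : IsOpen Ω) (hΩconn : IsConnected Ω) (hΓΩ : Γ ⊆ Ω)
    (hacc : ∃ z ∈ Γ, AccPt z (Filter.principal Γ))
    (S : ℂ → ℂ) (hS : ∀ z ∈ Ω, DifferentiableAt ℂ S z)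
    (hSΓ : ∀ z ∈ Γ, S z = starRingEnd ℂ z)
    (hmaps : (starRingEnd ℂ) '' (S '' Ω) ⊆ Ω) :
    ∀ z ∈ Ω, starRingEnd ℂ (S (starRingEnd ℂ (S z))) = z := by
  set g : ℂ → ℂ := fun z => starRingEnd ℂ (S (starRingEnd ℂ (S z))) with hg
  have hmem : ∀ z ∈ Ω, starRingEnd ℂ (S z) ∈ Ω := fun z hz =>
    hmaps ⟨S z, ⟨z, hz, rfl⟩, rfl⟩
  have hgdiff : ∀ z ∈ Ω, DifferentiableAt ℂ g z := by
    intro z hz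
    have h1 : DifferentiableAt ℂ S z := hS z hz
    have h2 : DifferentiableAt ℂ S (starRingEnd ℂ (S z)) := hS _ (hmem z hz)
    have h3 : HasDerivAt (fun u => starRingEnd ℂ (S (starRingEnd ℂ u)))
        (starRingEnd ℂ (deriv S (starRingEnd ℂ (S z)))) (S z) :=
      conj_comp_hasDerivAt h2.hasDerivAt
    exact (h3.comp z h1.hasDerivAt).differentiableAt
  have hgdo : DifferentiableOn ℂ g Ω := fun z hz => (hgdiff z hz).differentiableWithinAt
  have hgan : AnalyticOnNhd ℂ g Ω := hgdo.analyticOnNhd hΩopen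
  have hidan : AnalyticOnNhd ℂ id Ω := fun z _ => analyticAt_id
  obtain ⟨z₀, hz₀Γ, hz₀acc⟩ := hacc
  have hfreq : ∃ᶠ z in 𝓝[≠] z₀, g z = id z := by
    rw [accPt_iff_frequently] at hz₀acc
    have : ∃ᶠ z in 𝓝 z₀, z ≠ z₀ ∧ g z = id z := by
      refine hz₀acc.mono fun z hz => ⟨hz.1, ?_⟩
      have hzΓ := hz.2
      have h1 : S z = starRingEnd ℂ z := hSΓ z hzΓ
      have h2 : starRingEnd ℂ (S z) = z := by rw [h1, Complex.conj_conj]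
      simp only [hg, h2, h1, Complex.conj_conj, id]
    rw [frequently_nhdsWithin_iff]
    exact this.mono fun z hz => ⟨hz.2, hz.1⟩
  have := hgan.eqOn_of_preconnected_of_frequently_eq hidan hΩconn.isPreconnected
    (hΓΩ hz₀Γ) hfreq
  exact fun z hz => this hz
end

section
/- Let I ⊆ ℝ be a nonempty open interval, let V ⊆ ℂ be an open set containing I, and let γ : ℂ → ℂ be analytic and injective on V with nonvanishing derivative on V. Let Γ = γ(I). Then there exist an open set U ⊆ ℂ with Γ ⊆ U and a function S : ℂ → ℂ analytic on U such that S(z) = conj z for every z ∈ Γ. -/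
open Function Set Topology

/-- Conjugate-holomorphic reflection: if `γ` is ℂ-differentiable at `conj w`,
then `u ↦ conj (γ (conj u))` is ℂ-differentiable at `w`. -/
lemma conj_comp_conj_differentiableAt {γ : ℂ → ℂ} {w : ℂ}
    (h : DifferentiableAt ℂ γ (starRingEnd ℂ w)) :
    DifferentiableAt ℂ (fun u => starRingEnd ℂ (γ (starRingEnd ℂ u))) w := by
  set d := deriv γ (starRingEnd ℂ w) with hd
  set c : ℂ →L[ℝ] ℂ := Complex.conjCLE.toContinuousLinearMap with hc
  have hcf : ∀ z : ℂ, HasFDerivAt (starRingEnd ℂ) c z := by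
    intro z
    have := c.hasFDerivAt (x := z)
    convert this using 2
    funext u; simp [hc]
  have hγd : HasFDerivAt γ (((1 : ℂ →L[ℂ] ℂ).smulRight d).restrictScalars ℝ)
      (starRingEnd ℂ w) := (h.hasDerivAt.hasFDerivAt).restrictScalars ℝ
  have hcomp : HasFDerivAt (fun u => starRingEnd ℂ (γ (starRingEnd ℂ u)))
      (c ∘L ((((1 : ℂ →L[ℂ] ℂ).smulRight d).restrictScalars ℝ) ∘L c)) w :=
    (hcf _).comp w (hγd.comp w (hcf w))
  have key : ((1 : ℂ →L[ℂ] ℂ).smulRight (starRingEnd ℂ d)).restrictScalars ℝ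
      = c ∘L ((((1 : ℂ →L[ℂ] ℂ).smulRight d).restrictScalars ℝ) ∘L c) := by
    apply ContinuousLinearMap.ext
    intro k
    simp [hc, Complex.conjCLE_apply, smul_eq_mul, map_mul, mul_comm]
  exact (hasFDerivAt_of_restrictScalars ℝ hcomp key).differentiableAt

/-- Existence of the Schwarz function: for an analytic arc Γ there exist an open
neighborhood U of Γ and an analytic function S on U with S(z) = conj z on Γ. -/
theorem schwarz_function_exists
    (I : Set ℝ) (hIne : I.Nonempty) (hIopen : IsOpen I) (hIconn : I.OrdConnected)
    (V : Set ℂ) (hV : IsOpen V) (hIV : (Complex.ofReal '' I) ⊆ V)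
    (γ : ℂ → ℂ) (hγdiff : ∀ z ∈ V, DifferentiableAt ℂ γ z)
    (hγinj : Set.InjOn γ V) (hγderiv : ∀ z ∈ V, deriv γ z ≠ 0)
    (Γ : Set ℂ) (hΓ : Γ = γ '' (Complex.ofReal '' I)) :
    ∃ U : Set ℂ, IsOpen U ∧ Γ ⊆ U ∧
      ∃ S : ℂ → ℂ, (∀ z ∈ U, DifferentiableAt ℂ S z) ∧
        ∀ z ∈ Γ, S z = starRingEnd ℂ z := by
  -- γ has a strict derivative at each point of V (by analyticity)
  have hstrict : ∀ z ∈ V, HasStrictDerivAt γ (deriv γ z) z := by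
    intro z hz
    have han : AnalyticAt ℂ γ z :=
      DifferentiableOn.analyticAt (fun x hx => (hγdiff x hx).differentiableWithinAt)
        (hV.mem_nhds hz)
    obtain ⟨p, hp⟩ := han
    have h1 := hp.hasStrictDerivAt
    have h2 : deriv γ z = p 1 fun _ => 1 := hp.deriv
    rw [h2]; exact h1
  -- the domain of the reflection
  set W : Set ℂ := V ∩ (starRingEnd ℂ) ⁻¹' V with hWdef
  have hWopen : IsOpen W := hV.inter (hV.preimage Complex.continuous_conj)
  have hIW : (Complex.ofReal '' I) ⊆ W := by
    rintro z ⟨x, hx, rfl⟩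
    refine ⟨hIV ⟨x, hx, rfl⟩, ?_⟩
    simp only [mem_preimage, Complex.conj_ofReal]
    exact hIV ⟨x, hx, rfl⟩
  -- the global inverse of γ on V
  set g : ℂ → ℂ := Function.invFunOn γ V with hgdef
  have hginv : ∀ w ∈ V, g (γ w) = w := fun w hw => hγinj.leftInvOn_invFunOn hw
  refine ⟨γ '' W, ?_, ?_, fun z => starRingEnd ℂ (γ (starRingEnd ℂ (g z))), ?_, ?_⟩
  · -- openness of γ '' W
    rw [isOpen_iff_mem_nhds]
    rintro z ⟨w, hw, rfl⟩
    have hmap : Filter.map γ (𝓝 w) = 𝓝 (γ w) :=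
      (hstrict w hw.1).map_nhds_eq (hγderiv w hw.1)
    rw [← hmap, Filter.mem_map]
    exact Filter.mem_of_superset (hWopen.mem_nhds hw) (subset_preimage_image γ W)
  · -- Γ ⊆ γ '' W
    rw [hΓ]
    exact image_mono (f := γ) hIW
  · -- differentiability of S on γ '' W
    rintro z ⟨w, hw, rfl⟩
    have hgw : g (γ w) = w := hginv w hw.1
    -- g has a strict derivative at γ w
    have hev : ∀ᶠ x in 𝓝 w, g (γ x) = x := by
      filter_upwards [hV.mem_nhds hw.1] with x hx using hginv x hx
    have hg : HasStrictDerivAt g (deriv γ w)⁻¹ (γ w) :=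
      (hstrict w hw.1).to_local_left_inverse (hγderiv w hw.1) hev
    have hgd : DifferentiableAt ℂ g (γ w) := hg.hasDerivAt.differentiableAt
    -- the reflection σ is differentiable at g (γ w) = w
    have hσ : DifferentiableAt ℂ (fun u => starRingEnd ℂ (γ (starRingEnd ℂ u))) (g (γ w)) := by
      rw [hgw]
      exact conj_comp_conj_differentiableAt (hγdiff _ hw.2)
    exact hσ.comp (γ w) hgd
  · -- S = conj on Γ
    rw [hΓ]
    rintro z ⟨-, ⟨x, hx, rfl⟩, rfl⟩
    have h1 : g (γ (x : ℂ)) = (x : ℂ) := hginv _ (hIV ⟨x, hx, rfl⟩)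
    simp only []
    rw [h1, Complex.conj_ofReal]
end

section
/- Let I ⊆ ℝ be a nonempty open interval, let V ⊆ ℂ be an open set containing I, let γ : ℂ → ℂ be analytic and injective on V with nonvanishing derivative on V, and let Γ = γ(I). Let Ω ⊆ ℂ be an open set containing Γ that is partitioned into three pairwise disjoint sets Ω⁺, Γ, Ω⁻ with Ω⁺ and Ω⁻ open. Let S : ℂ → ℂ be analytic on Ω with S(z) = conj z for z ∈ Γ, conj(S(Ω⁺)) = Ω⁻, conj(S(Ω⁻)) = Ω⁺, and conj(S(conj(S(z)))) = z for all z ∈ Ω. Let f : ℂ → ℂ be analytic on Ω⁺, continuous on Ω⁺ ∪ Γ, and real-valued on Γ. Then the function F defined by F(z) = f(z) for z ∈ Ω⁺ ∪ Γ and F(z) = conj(f(conj(S(z)))) for z ∈ Ω⁻ is analytic on all of Ω. -/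
open Complex Set Metric intervalIntegral Filter Asymptotics Topology

/-- Antiholomorphic conjugation: if `f` has derivative `d` at `w`, then
`z ↦ conj (f (conj z))` has derivative `conj d` at `conj w`. -/
lemma hasDerivAt_conj_comp_conj {f : ℂ → ℂ} {d w : ℂ} (hf : HasDerivAt f d w) :
    HasDerivAt (fun z => (starRingEnd ℂ) (f ((starRingEnd ℂ) z))) ((starRingEnd ℂ) d)
      ((starRingEnd ℂ) w) := by
  rw [hasDerivAt_iff_tendsto_slope] at hf ⊢
  have hconj : Tendsto (starRingEnd ℂ) (𝓝[≠] ((starRingEnd ℂ) w)) (𝓝[≠] w) := by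
    rw [tendsto_nhdsWithin_iff]
    constructor
    · have := (Complex.continuous_conj.tendsto ((starRingEnd ℂ) w)).mono_left
        (nhdsWithin_le_nhds (s := {(starRingEnd ℂ) w}ᶜ))
      simpa using this
    · filter_upwards [self_mem_nhdsWithin] with z hz
      simp only [mem_compl_iff, mem_singleton_iff] at hz ⊢
      intro h
      apply hz
      have := congrArg (starRingEnd ℂ) h
      simpa using this
  have key : (slope (fun z => (starRingEnd ℂ) (f ((starRingEnd ℂ) z))) ((starRingEnd ℂ) w)) =
      fun z => (starRingEnd ℂ) (slope f w ((starRingEnd ℂ) z)) := by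
    funext z
    simp only [slope_def_field, map_div₀, map_sub, Complex.conj_conj]
  rw [key]
  exact (Complex.continuous_conj.tendsto d).comp (hf.comp hconj)

lemma mem_uIcc_of_Ioo' {x1 x2 t : ℝ} (h : t ∈ Set.Ioo (min x1 x2) (max x1 x2)) :
    t ∈ Set.uIcc x1 x2 := by
  rcases le_total x1 x2 with h' | h'
  · rw [Set.uIcc_of_le h']
    rw [min_eq_left h', max_eq_right h'] at h
    exact Set.Ioo_subset_Icc_self h
  · rw [Set.uIcc_of_ge h']
    rw [min_eq_right h', max_eq_left h'] at h
    exact Set.Ioo_subset_Icc_self h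

lemma mem_reProdIm_coord {x y : ℝ} {s t : Set ℝ} :
    (↑x + ↑y * Complex.I) ∈ s ×ℂ t ↔ x ∈ s ∧ y ∈ t := by
  rw [Complex.mem_reProdIm]
  simp

/-- Morera-type lemma: a function continuous on an open square and complex
differentiable off the real axis there is differentiable on the whole square. -/
lemma morera_off_real_axis {f : ℂ → ℂ} {a b a' b' : ℝ}
    (Hc : ContinuousOn f (Set.Ioo a b ×ℂ Set.Ioo a' b'))
    (Hd : ∀ z ∈ Set.Ioo a b ×ℂ Set.Ioo a' b', z.im ≠ 0 → DifferentiableAt ℂ f z) :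
    ∀ z ∈ Set.Ioo a b ×ℂ Set.Ioo a' b', DifferentiableAt ℂ f z := by
  set T : Set ℂ := Set.Ioo a b ×ℂ Set.Ioo a' b' with hTdef
  have hTo : IsOpen T := IsOpen.reProdIm isOpen_Ioo isOpen_Ioo
  -- interval integrability of restrictions to horizontal/vertical segments
  have hiH : ∀ y : ℝ, y ∈ Set.Ioo a' b' → ∀ c d : ℝ, c ∈ Set.Ioo a b → d ∈ Set.Ioo a b →
      IntervalIntegrable (fun x : ℝ => f (↑x + ↑y * I)) MeasureTheory.volume c d := by
    intro y hy c d hc hd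
    apply ContinuousOn.intervalIntegrable
    apply Hc.comp (Continuous.continuousOn (by fun_prop))
    intro x hx
    exact mem_reProdIm_coord.2 ⟨Set.ordConnected_Ioo.uIcc_subset hc hd hx, hy⟩
  have hiV : ∀ x : ℝ, x ∈ Set.Ioo a b → ∀ c d : ℝ, c ∈ Set.Ioo a' b' → d ∈ Set.Ioo a' b' →
      IntervalIntegrable (fun y : ℝ => f (↑x + ↑y * I)) MeasureTheory.volume c d := by
    intro x hx c d hc hd
    apply ContinuousOn.intervalIntegrable
    apply Hc.comp (Continuous.continuousOn (by fun_prop))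
    intro y hy
    exact mem_reProdIm_coord.2 ⟨hx, Set.ordConnected_Ioo.uIcc_subset hc hd hy⟩
  -- vanishing of boundary integrals over rectangles avoiding the real axis in their interior
  have R0 : ∀ x1 x2 y1 y2 : ℝ, x1 ∈ Set.Ioo a b → x2 ∈ Set.Ioo a b → y1 ∈ Set.Ioo a' b' →
      y2 ∈ Set.Ioo a' b' → (0:ℝ) ∉ Set.Ioo (min y1 y2) (max y1 y2) →
      (∫ x : ℝ in x1..x2, f (↑x + ↑y1 * I)) - (∫ x : ℝ in x1..x2, f (↑x + ↑y2 * I)) +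
        I • (∫ y : ℝ in y1..y2, f (↑x2 + ↑y * I)) -
        I • (∫ y : ℝ in y1..y2, f (↑x1 + ↑y * I)) = 0 := by
    intro x1 x2 y1 y2 hx1 hx2 hy1 hy2 h0
    exact integral_boundary_rect_eq_zero_of_differentiable_on_off_countable f ⟨x1, y1⟩ ⟨x2, y2⟩ ∅
      countable_empty
      (Hc.mono (by
        intro z hz
        rw [Complex.mem_reProdIm] at hz ⊢
        exact ⟨Set.ordConnected_Ioo.uIcc_subset hx1 hx2 hz.1,
          Set.ordConnected_Ioo.uIcc_subset hy1 hy2 hz.2⟩))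
      (by
        rintro z ⟨hz, -⟩
        rw [Complex.mem_reProdIm] at hz
        have hzT : z ∈ T := by
          rw [hTdef, Complex.mem_reProdIm]
          exact ⟨Set.ordConnected_Ioo.uIcc_subset hx1 hx2 (mem_uIcc_of_Ioo' hz.1),
            Set.ordConnected_Ioo.uIcc_subset hy1 hy2 (mem_uIcc_of_Ioo' hz.2)⟩
        exact Hd z hzT (fun h => h0 (h ▸ hz.2)))
  -- vanishing for all rectangles
  have haux : ∀ y : ℝ, (0:ℝ) ∉ Set.Ioo (min y 0) (max y 0) := by
    intro y hy
    rcases hy with ⟨h1, h2⟩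
    rcases le_or_gt y 0 with h | h
    · rw [max_eq_right h] at h2; exact lt_irrefl _ h2
    · rw [min_eq_right h.le] at h1; exact lt_irrefl _ h1
  have R : ∀ x1 x2 y1 y2 : ℝ, x1 ∈ Set.Ioo a b → x2 ∈ Set.Ioo a b → y1 ∈ Set.Ioo a' b' →
      y2 ∈ Set.Ioo a' b' →
      (∫ x : ℝ in x1..x2, f (↑x + ↑y1 * I)) - (∫ x : ℝ in x1..x2, f (↑x + ↑y2 * I)) +
        I • (∫ y : ℝ in y1..y2, f (↑x2 + ↑y * I)) -
        I • (∫ y : ℝ in y1..y2, f (↑x1 + ↑y * I)) = 0 := by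
    intro x1 x2 y1 y2 hx1 hx2 hy1 hy2
    by_cases h0 : (0:ℝ) ∈ Set.Ioo (min y1 y2) (max y1 y2)
    · have h0' : (0:ℝ) ∈ Set.Ioo a' b' :=
        Set.ordConnected_Ioo.uIcc_subset hy1 hy2 (mem_uIcc_of_Ioo' h0)
      have e1 := R0 x1 x2 y1 0 hx1 hx2 hy1 h0' (haux y1)
      have e2 := R0 x1 x2 0 y2 hx1 hx2 h0' hy2 (by
        intro hmem
        apply haux y2
        rwa [min_comm, max_comm] at hmem)
      have e3 := intervalIntegral.integral_add_adjacent_intervals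
        (hiV x2 hx2 y1 0 hy1 h0') (hiV x2 hx2 0 y2 h0' hy2)
      have e4 := intervalIntegral.integral_add_adjacent_intervals
        (hiV x1 hx1 y1 0 hy1 h0') (hiV x1 hx1 0 y2 h0' hy2)
      simp only [smul_eq_mul] at e1 e2 ⊢
      linear_combination e1 + e2 - I * e3 + I * e4
    · exact R0 x1 x2 y1 y2 hx1 hx2 hy1 hy2 h0
  -- the proof of differentiability at a point z₀ of T
  intro z₀ hz₀
  have hz₀' := hz₀
  rw [hTdef, Complex.mem_reProdIm] at hz₀'
  -- the primitive
  set g : ℂ → ℂ := fun z => (∫ x : ℝ in z₀.re..z.re, f (↑x + ↑z₀.im * I)) +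
      I • ∫ y : ℝ in z₀.im..z.im, f (↑z.re + ↑y * I) with hgdef
  have key : ∀ w ∈ T, ∀ z ∈ T, g z - g w =
      (∫ x : ℝ in w.re..z.re, f (↑x + ↑w.im * I)) +
        I • ∫ y : ℝ in w.im..z.im, f (↑z.re + ↑y * I) := by
    intro w hw z hz
    rw [hTdef, Complex.mem_reProdIm] at hw hz
    have hsplitH := intervalIntegral.integral_add_adjacent_intervals
      (hiH z₀.im hz₀'.2 z₀.re w.re hz₀'.1 hw.1) (hiH z₀.im hz₀'.2 w.re z.re hw.1 hz.1)
    have hsplitV := intervalIntegral.integral_add_adjacent_intervals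
      (hiV z.re hz.1 z₀.im w.im hz₀'.2 hw.2) (hiV z.re hz.1 w.im z.im hw.2 hz.2)
    have hrect := R w.re z.re z₀.im w.im hw.1 hz.1 hz₀'.2 hw.2
    simp only [hgdef, smul_eq_mul] at hrect ⊢
    linear_combination hrect - hsplitH - I * hsplitV
  -- the primitive has derivative f w at every w ∈ T
  have hg : ∀ w ∈ T, HasDerivAt g (f w) w := by
    intro w hw
    have hw' := hw
    rw [hTdef, Complex.mem_reProdIm] at hw'
    rw [hasDerivAt_iff_isLittleO, Asymptotics.isLittleO_iff]
    intro ε hε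
    obtain ⟨δ1, hδ1pos, hδ1⟩ := Metric.isOpen_iff.1 hTo w hw
    obtain ⟨δ2, hδ2pos, hδ2⟩ := Metric.continuousAt_iff.1 (Hc.continuousAt (hTo.mem_nhds hw))
      (ε / 2) (by positivity)
    set δ : ℝ := min δ1 δ2 / 2 with hδdef
    have hδpos : 0 < δ := by positivity
    filter_upwards [Metric.ball_mem_nhds w hδpos] with z hzball
    have hzT : z ∈ T := hδ1 (by
      refine Metric.mem_ball.2 (lt_of_lt_of_le (Metric.mem_ball.1 hzball) ?_)
      calc δ ≤ min δ1 δ2 := by rw [hδdef]; linarith [lt_min_iff.2 ⟨hδ1pos, hδ2pos⟩]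
        _ ≤ δ1 := min_le_left _ _)
    have hz' := hzT
    rw [hTdef, Complex.mem_reProdIm] at hz'
    have hdistz : dist z w < δ := Metric.mem_ball.1 hzball
    -- bounds on f near w
    have hbound : ∀ u : ℂ, dist u w < 2 * δ → ‖f u - f w‖ ≤ ε / 2 := by
      intro u hu
      have : dist u w < δ2 := lt_of_lt_of_le hu (by
        rw [hδdef]
        calc 2 * (min δ1 δ2 / 2) = min δ1 δ2 := by ring
          _ ≤ δ2 := min_le_right _ _)
      have h2 : dist (f u) (f w) < ε / 2 := hδ2 this
      rw [dist_eq_norm] at h2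
      exact h2.le
    -- the two difference integrals
    have hE : (∫ x : ℝ in w.re..z.re, (f (↑x + ↑w.im * I) - f w)) =
        (∫ x : ℝ in w.re..z.re, f (↑x + ↑w.im * I)) - (↑z.re - ↑w.re) * f w := by
      rw [intervalIntegral.integral_sub (hiH w.im hw'.2 w.re z.re hw'.1 hz'.1)
        intervalIntegrable_const, intervalIntegral.integral_const, real_smul]
      push_cast
      ring
    have hD : (∫ y : ℝ in w.im..z.im, (f (↑z.re + ↑y * I) - f w)) =
        (∫ y : ℝ in w.im..z.im, f (↑z.re + ↑y * I)) - (↑z.im - ↑w.im) * f w := by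
      rw [intervalIntegral.integral_sub (hiV z.re hz'.1 w.im z.im hw'.2 hz'.2)
        intervalIntegrable_const, intervalIntegral.integral_const, real_smul]
      push_cast
      ring
    have hzw : z - w = (↑z.re - ↑w.re) + (↑z.im - ↑w.im) * I := by
      rw [← Complex.re_add_im (z - w), Complex.sub_re, Complex.sub_im]
      push_cast
      ring
    have hEq := key w hw z hzT
    have hrepr : g z - g w - (z - w) • f w =
        (∫ x : ℝ in w.re..z.re, (f (↑x + ↑w.im * I) - f w)) +
          I * ∫ y : ℝ in w.im..z.im, (f (↑z.re + ↑y * I) - f w) := by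
      simp only [smul_eq_mul] at hEq ⊢
      linear_combination hEq - hE - I * hD - f w * hzw
    have hdistc : ∀ x y : ℝ, dist (↑x + ↑y * I : ℂ) w ≤ |x - w.re| + |y - w.im| := by
      intro x y
      rw [Complex.dist_eq]
      refine le_trans (Complex.norm_le_abs_re_add_abs_im _) (le_of_eq ?_)
      congr 2 <;> simp
    have hrebd : |z.re - w.re| ≤ dist z w := by
      rw [Complex.dist_eq]
      simpa [Complex.sub_re] using Complex.abs_re_le_norm (z - w)
    have himbd : |z.im - w.im| ≤ dist z w := by
      rw [Complex.dist_eq]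
      simpa [Complex.sub_im] using Complex.abs_im_le_norm (z - w)
    have hb1 : ‖∫ x : ℝ in w.re..z.re, (f (↑x + ↑w.im * I) - f w)‖ ≤ ε / 2 * |z.re - w.re| := by
      apply intervalIntegral.norm_integral_le_of_norm_le_const
      intro x hx
      apply hbound
      have hx' : |x - w.re| ≤ |z.re - w.re| :=
        abs_sub_left_of_mem_uIcc (Set.uIoc_subset_uIcc hx)
      calc dist (↑x + ↑w.im * I : ℂ) w ≤ |x - w.re| + |w.im - w.im| := hdistc x w.im
        _ = |x - w.re| := by simp
        _ ≤ |z.re - w.re| := hx'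
        _ ≤ dist z w := hrebd
        _ < 2 * δ := by linarith [hdistz]
    have hb2 : ‖∫ y : ℝ in w.im..z.im, (f (↑z.re + ↑y * I) - f w)‖ ≤ ε / 2 * |z.im - w.im| := by
      apply intervalIntegral.norm_integral_le_of_norm_le_const
      intro y hy
      apply hbound
      have hy' : |y - w.im| ≤ |z.im - w.im| :=
        abs_sub_left_of_mem_uIcc (Set.uIoc_subset_uIcc hy)
      calc dist (↑z.re + ↑y * I : ℂ) w ≤ |z.re - w.re| + |y - w.im| := hdistc z.re y
        _ ≤ dist z w + dist z w := add_le_add hrebd (le_trans hy' himbd)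
        _ < 2 * δ := by linarith [hdistz]
    have hnz : ‖z - w‖ = dist z w := by rw [dist_eq_norm]
    calc ‖g z - g w - (z - w) • f w‖
        = ‖(∫ x : ℝ in w.re..z.re, (f (↑x + ↑w.im * I) - f w)) +
            I * ∫ y : ℝ in w.im..z.im, (f (↑z.re + ↑y * I) - f w)‖ := by rw [hrepr]
      _ ≤ ‖∫ x : ℝ in w.re..z.re, (f (↑x + ↑w.im * I) - f w)‖ +
            ‖I * ∫ y : ℝ in w.im..z.im, (f (↑z.re + ↑y * I) - f w)‖ := norm_add_le _ _
      _ = ‖∫ x : ℝ in w.re..z.re, (f (↑x + ↑w.im * I) - f w)‖ +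
            ‖∫ y : ℝ in w.im..z.im, (f (↑z.re + ↑y * I) - f w)‖ := by
          rw [norm_mul, Complex.norm_I, one_mul]
      _ ≤ ε / 2 * |z.re - w.re| + ε / 2 * |z.im - w.im| := add_le_add hb1 hb2
      _ ≤ ε / 2 * ‖z - w‖ + ε / 2 * ‖z - w‖ := by
          rw [hnz]
          have h1 := mul_le_mul_of_nonneg_left hrebd (by positivity : (0:ℝ) ≤ ε / 2)
          have h2 := mul_le_mul_of_nonneg_left himbd (by positivity : (0:ℝ) ≤ ε / 2)
          linarith
      _ = ε * ‖z - w‖ := by ring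
  -- conclude: g is holomorphic on T, its derivative is f, so f is differentiable at z₀
  have hgdiff : DifferentiableOn ℂ g T :=
    fun w hw => ((hg w hw).differentiableAt).differentiableWithinAt
  have hgan : AnalyticOnNhd ℂ g T := hgdiff.analyticOnNhd hTo
  have hder : AnalyticOnNhd ℂ (deriv g) T := hgan.deriv
  have heq : deriv g =ᶠ[nhds z₀] f :=
    Filter.eventuallyEq_of_mem (hTo.mem_nhds hz₀) (fun w hw => (hg w hw).deriv)
  exact heq.differentiableAt_iff.1 ((hder z₀ hz₀).differentiableAt)

/-- Theorem 2: reflection across an analytic curve. If f is analytic on Ω⁺,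
continuous on Ω⁺ ∪ Γ and real on Γ, then the formula F(z) = conj (f (conj (S z)))
on Ω⁻ defines an analytic continuation of f to all of the reflection domain Ω. -/
theorem reflection_across_analytic_curve
    (I : Set ℝ) (hIne : I.Nonempty) (hIopen : IsOpen I) (hIconn : I.OrdConnected)
    (V : Set ℂ) (hV : IsOpen V) (hIV : (Complex.ofReal '' I) ⊆ V)
    (γ : ℂ → ℂ) (hγdiff : ∀ z ∈ V, DifferentiableAt ℂ γ z)
    (hγinj : Set.InjOn γ V) (hγderiv : ∀ z ∈ V, deriv γ z ≠ 0)
    (Γ : Set ℂ) (hΓ : Γ = γ '' (Complex.ofReal '' I))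
    (Ω Ωp Ωm : Set ℂ) (hΩopen : IsOpen Ω)
    (hΩeq : Ω = Ωp ∪ Γ ∪ Ωm)
    (hd1 : Disjoint Ωp Γ) (hd2 : Disjoint Ωp Ωm) (hd3 : Disjoint Γ Ωm)
    (hΩp : IsOpen Ωp) (hΩm : IsOpen Ωm)
    (S : ℂ → ℂ) (hS : ∀ z ∈ Ω, DifferentiableAt ℂ S z)
    (hSΓ : ∀ z ∈ Γ, S z = starRingEnd ℂ z)
    (hSp : (starRingEnd ℂ) '' (S '' Ωp) = Ωm)
    (hSm : (starRingEnd ℂ) '' (S '' Ωm) = Ωp)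
    (hinv : ∀ z ∈ Ω, starRingEnd ℂ (S (starRingEnd ℂ (S z))) = z)
    (f : ℂ → ℂ) (hf : ∀ z ∈ Ωp, DifferentiableAt ℂ f z)
    (hfc : ContinuousOn f (Ωp ∪ Γ))
    (hreal : ∀ z ∈ Γ, (f z).im = 0)
    (F : ℂ → ℂ)
    (hF1 : ∀ z ∈ Ωp ∪ Γ, F z = f z)
    (hF2 : ∀ z ∈ Ωm, F z = starRingEnd ℂ (f (starRingEnd ℂ (S z)))) :
    ∀ z ∈ Ω, DifferentiableAt ℂ F z := by
  -- basic inclusions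
  have hΓΩ : Γ ⊆ Ω := by rw [hΩeq]; exact fun z hz => Or.inl (Or.inr hz)
  have hpΩ : Ωp ⊆ Ω := by rw [hΩeq]; exact fun z hz => Or.inl (Or.inl hz)
  have hmΩ : Ωm ⊆ Ω := by rw [hΩeq]; exact fun z hz => Or.inr hz
  have hmap_m : ∀ z ∈ Ωm, starRingEnd ℂ (S z) ∈ Ωp := by
    intro z hz; rw [← hSm]; exact ⟨S z, ⟨z, hz, rfl⟩, rfl⟩
  have hΓfix : ∀ z ∈ Γ, starRingEnd ℂ (S z) = z := by
    intro z hz; rw [hSΓ z hz]; exact starRingEnd_self_apply z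
  -- differentiability of F on Ωp
  have hFp : ∀ z ∈ Ωp, DifferentiableAt ℂ F z := by
    intro z hz
    have heq : F =ᶠ[nhds z] f :=
      Filter.eventuallyEq_of_mem (hΩp.mem_nhds hz) (fun w hw => hF1 w (Or.inl hw))
    exact heq.differentiableAt_iff.2 (hf z hz)
  -- differentiability of F on Ωm
  have hFm : ∀ z ∈ Ωm, DifferentiableAt ℂ F z := by
    intro z hz
    have hz' : starRingEnd ℂ (S z) ∈ Ωp := hmap_m z hz
    have hfd : HasDerivAt f (deriv f (starRingEnd ℂ (S z))) (starRingEnd ℂ (S z)) :=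
      (hf _ hz').hasDerivAt
    have hphi := hasDerivAt_conj_comp_conj hfd
    rw [starRingEnd_self_apply] at hphi
    have hSd : HasDerivAt S (deriv S z) z := (hS z (hmΩ hz)).hasDerivAt
    have hcomp := hphi.comp z hSd
    have heq : F =ᶠ[nhds z] fun u => starRingEnd ℂ (f (starRingEnd ℂ (S u))) :=
      Filter.eventuallyEq_of_mem (hΩm.mem_nhds hz) (fun w hw => hF2 w hw)
    exact heq.differentiableAt_iff.2 hcomp.differentiableAt
  -- continuity of F on Ω
  have hSc : ContinuousOn S Ω := fun z hz => (hS z hz).continuousAt.continuousWithinAt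
  have hconjS : ContinuousOn (fun z => starRingEnd ℂ (S z)) Ω :=
    Complex.continuous_conj.comp_continuousOn hSc
  have hFΓeq : ∀ z ∈ Ωm ∪ Γ, F z = starRingEnd ℂ (f (starRingEnd ℂ (S z))) := by
    intro z hz
    rcases hz with h | h
    · exact hF2 z h
    · rw [hΓfix z h]
      exact (hF1 z (Or.inr h)).trans ((Complex.conj_eq_iff_im.2 (hreal z h)).symm)
  have hFc : ContinuousOn F Ω := by
    intro z hz
    rw [hΩeq] at hz
    rcases hz with (hz | hz) | hz
    · -- z ∈ Ωp
      have hca : ContinuousAt f z := hfc.continuousAt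
        (Filter.mem_of_superset (hΩp.mem_nhds hz) Set.subset_union_left)
      have heq : F =ᶠ[nhds z] f :=
        Filter.eventuallyEq_of_mem (hΩp.mem_nhds hz) (fun w hw => hF1 w (Or.inl hw))
      exact (hca.congr heq.symm).continuousWithinAt
    · -- z ∈ Γ
      have hsub : Ω ⊆ (Ωp ∪ Γ) ∪ (Ωm ∪ Γ) := by
        rw [hΩeq]
        rintro w ((h | h) | h)
        · exact Or.inl (Or.inl h)
        · exact Or.inl (Or.inr h)
        · exact Or.inr (Or.inl h)
      refine ContinuousWithinAt.mono ?_ hsub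
      apply ContinuousWithinAt.union
      · exact (hfc z (Or.inr hz)).congr (fun w hw => hF1 w hw) (hF1 z (Or.inr hz))
      · -- on Ωm ∪ Γ
        have hin : ContinuousWithinAt (fun u => starRingEnd ℂ (S u)) (Ωm ∪ Γ) z :=
          (hconjS z (hΓΩ hz)).mono (by
            rw [hΩeq]
            rintro w (h | h)
            · exact Or.inr h
            · exact Or.inl (Or.inr h))
        have hmaps : Set.MapsTo (fun u => starRingEnd ℂ (S u)) (Ωm ∪ Γ) (Ωp ∪ Γ) := by
          rintro w (h | h)
          · exact Or.inl (hmap_m w h)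
          · show (starRingEnd ℂ) (S w) ∈ Ωp ∪ Γ
            rw [hΓfix w h]; exact Or.inr h
        have hfin : ContinuousWithinAt f (Ωp ∪ Γ) ((fun u => starRingEnd ℂ (S u)) z) := by
          show ContinuousWithinAt f (Ωp ∪ Γ) ((starRingEnd ℂ) (S z))
          rw [hΓfix z hz]
          exact hfc z (Or.inr hz)
        have hstep : ContinuousWithinAt (fun u => f (starRingEnd ℂ (S u))) (Ωm ∪ Γ) z :=
          ContinuousWithinAt.comp (g := f) (f := fun u => starRingEnd ℂ (S u)) (x := z)
            hfin hin hmaps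
        have hcw : ContinuousWithinAt (fun u => starRingEnd ℂ (f (starRingEnd ℂ (S u))))
            (Ωm ∪ Γ) z :=
          Complex.continuous_conj.continuousAt.comp_continuousWithinAt hstep
        exact hcw.congr (fun w hw => hFΓeq w hw) (hFΓeq z (Or.inr hz))
    · -- z ∈ Ωm
      have hz' : starRingEnd ℂ (S z) ∈ Ωp := hmap_m z hz
      have hin : ContinuousAt (fun u => starRingEnd ℂ (S u)) z :=
        Complex.continuous_conj.continuousAt.comp ((hS z (hmΩ hz)).continuousAt)
      have hfin : ContinuousAt f (starRingEnd ℂ (S z)) := hfc.continuousAt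
        (Filter.mem_of_superset (hΩp.mem_nhds hz') Set.subset_union_left)
      have hstep2 : ContinuousAt (fun u => f (starRingEnd ℂ (S u))) z :=
        ContinuousAt.comp (g := f) (f := fun u => starRingEnd ℂ (S u)) (x := z) hfin hin
      have hca : ContinuousAt (fun u => starRingEnd ℂ (f (starRingEnd ℂ (S u)))) z :=
        Complex.continuous_conj.continuousAt.comp hstep2
      have heq : F =ᶠ[nhds z] fun u => starRingEnd ℂ (f (starRingEnd ℂ (S u))) :=
        Filter.eventuallyEq_of_mem (hΩm.mem_nhds hz) (fun w hw => hF2 w hw)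
      exact (hca.congr heq.symm).continuousWithinAt
  -- main argument
  intro z hz
  rw [hΩeq] at hz
  rcases hz with (hz | hz) | hz
  · exact hFp z hz
  · -- z ∈ Γ : the hard case
    rw [hΓ] at hz
    obtain ⟨w0, hw0, rfl⟩ := hz
    obtain ⟨x0, hx0, rfl⟩ := hw0
    have hΓ' : γ (↑x0 : ℂ) ∈ Γ := by rw [hΓ]; exact ⟨↑x0, ⟨x0, hx0, rfl⟩, rfl⟩
    have hw0V : (↑x0 : ℂ) ∈ V := hIV ⟨x0, hx0, rfl⟩
    have hζΩ : γ (↑x0 : ℂ) ∈ Ω := hΓΩ hΓ'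
    have hγc : ContinuousOn γ V := fun w hw => (hγdiff w hw).continuousAt.continuousWithinAt
    have hU : IsOpen (V ∩ γ ⁻¹' Ω) := hγc.isOpen_inter_preimage hV hΩopen
    have hx0U : (↑x0 : ℂ) ∈ V ∩ γ ⁻¹' Ω := ⟨hw0V, hζΩ⟩
    obtain ⟨t, ht0, htb⟩ := Metric.isOpen_iff.1 hU _ hx0U
    have hTsub : Set.Ioo (x0 - t/2) (x0 + t/2) ×ℂ Set.Ioo (-(t/2)) (t/2) ⊆ V ∩ γ ⁻¹' Ω := by
      intro u hu
      rw [Complex.mem_reProdIm] at hu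
      apply htb
      rw [Metric.mem_ball, Complex.dist_eq]
      calc ‖u - ↑x0‖ ≤ |(u - ↑x0).re| + |(u - ↑x0).im| :=
            Complex.norm_le_abs_re_add_abs_im _
        _ = |u.re - x0| + |u.im| := by simp
        _ < t/2 + t/2 := by
            apply add_lt_add
            · rw [abs_lt]; constructor <;> [linarith [hu.1.1]; linarith [hu.1.2]]
            · rw [abs_lt]; exact ⟨by linarith [hu.2.1], hu.2.2⟩
        _ = t := by ring
    have hx0T : (↑x0 : ℂ) ∈ Set.Ioo (x0 - t/2) (x0 + t/2) ×ℂ Set.Ioo (-(t/2)) (t/2) := by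
      rw [Complex.mem_reProdIm]
      simp only [Complex.ofReal_re, Complex.ofReal_im, Set.mem_Ioo]
      refine ⟨⟨by linarith, by linarith⟩, ⟨by linarith, by linarith⟩⟩
    -- F ∘ γ on the square
    have hcont : ContinuousOn (fun w => F (γ w))
        (Set.Ioo (x0 - t/2) (x0 + t/2) ×ℂ Set.Ioo (-(t/2)) (t/2)) :=
      hFc.comp (hγc.mono (fun u hu => (hTsub hu).1)) (fun u hu => (hTsub hu).2)
    have hdiffoff : ∀ u ∈ Set.Ioo (x0 - t/2) (x0 + t/2) ×ℂ Set.Ioo (-(t/2)) (t/2),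
        u.im ≠ 0 → DifferentiableAt ℂ (fun w => F (γ w)) u := by
      intro u hu him
      have huV : u ∈ V := (hTsub hu).1
      have huΩ : γ u ∈ Ω := (hTsub hu).2
      have hnotΓ : γ u ∉ Γ := by
        intro hmem
        rw [hΓ] at hmem
        obtain ⟨w, hw, heq⟩ := hmem
        obtain ⟨x, hx, rfl⟩ := hw
        have : u = (↑x : ℂ) := hγinj huV (hIV ⟨x, hx, rfl⟩) heq.symm
        rw [this] at him
        exact him (Complex.ofReal_im x)
      have hFd : DifferentiableAt ℂ F (γ u) := by
        rw [hΩeq] at huΩ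
        rcases huΩ with (h | h) | h
        · exact hFp _ h
        · exact absurd h hnotΓ
        · exact hFm _ h
      exact hFd.comp u (hγdiff u huV)
    have hmor := morera_off_real_axis hcont hdiffoff (↑x0 : ℂ) hx0T
    -- inverse function theorem for γ at x0
    have hdo : DifferentiableOn ℂ γ V := fun w hw => (hγdiff w hw).differentiableWithinAt
    have hcd : ContDiffAt ℂ 1 γ (↑x0 : ℂ) :=
      (hdo.contDiffOn hV).contDiffAt (hV.mem_nhds hw0V)
    have hsd : HasStrictDerivAt γ (deriv γ (↑x0 : ℂ)) (↑x0 : ℂ) :=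
      hcd.hasStrictDerivAt one_ne_zero
    have hne : deriv γ (↑x0 : ℂ) ≠ 0 := hγderiv _ hw0V
    have hE := hsd.hasStrictFDerivAt_equiv hne
    have hψd : DifferentiableAt ℂ (hE.localInverse γ _ _) (γ (↑x0 : ℂ)) :=
      hE.to_localInverse.differentiableAt
    have hψx0 : hE.localInverse γ _ _ (γ (↑x0 : ℂ)) = (↑x0 : ℂ) :=
      hE.localInverse_apply_image
    have hev : ∀ᶠ u in nhds (γ (↑x0 : ℂ)), γ (hE.localInverse γ _ _ u) = u :=
      hE.eventually_right_inverse
    have hcompdiff : DifferentiableAt ℂ (fun u => F (γ (hE.localInverse γ _ _ u)))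
        (γ (↑x0 : ℂ)) := by
      have h1 : DifferentiableAt ℂ (fun w => F (γ w)) (hE.localInverse γ _ _ (γ (↑x0 : ℂ))) := by
        rw [hψx0]; exact hmor
      exact h1.comp _ hψd
    have heq : (fun u => F (γ (hE.localInverse γ _ _ u))) =ᶠ[nhds (γ (↑x0 : ℂ))] F :=
      hev.mono (fun u hu => congrArg F hu)
    exact heq.differentiableAt_iff.1 hcompdiff
  · exact hFm z hz
end

section
/- Let I ⊆ ℝ be a nonempty open interval, let V ⊆ ℂ be an open set containing I, let γ : ℂ → ℂ be analytic and injective on V with nonvanishing derivative on V, and let Γ = γ(I). Let Ω ⊆ ℂ be an open set containing Γ that is partitioned into three pairwise disjoint sets Ω⁺, Γ, Ω⁻ with Ω⁺ and Ω⁻ open. Let S : ℂ → ℂ be analytic on Ω with S(z) = conj z for z ∈ Γ, conj(S(Ω⁺)) = Ω⁻, conj(S(Ω⁻)) = Ω⁺, and conj(S(conj(S(z)))) = z for all z ∈ Ω. Let f : ℂ → ℂ be analytic on Ω⁺, continuous on Ω⁺ ∪ Γ, and purely imaginary on Γ (Re f(z) = 0 for z ∈ Γ). Then the function F defined by F(z)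 = f(z) for z ∈ Ω⁺ ∪ Γ and F(z) = −conj(f(conj(S(z)))) for z ∈ Ω⁻ is analytic on all of Ω; that is, the reflection formula becomes f(conj(S(z))) = conj(−f(z)). -/
open Complex Set Metric intervalIntegral
open scoped Interval

lemma Ioo_minmax_subset_uIcc (a b : ℝ) : Ioo (min a b) (max a b) ⊆ [[a, b]] := by
  rw [uIcc]; exact Ioo_subset_Icc_self

lemma rect_eq_zero_off_axis {U : Set ℂ} {g : ℂ → ℂ}
    (Hc : ContinuousOn g U) (Hd : ∀ z ∈ U, z.im ≠ 0 → DifferentiableAt ℂ g z)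
    (z w : ℂ) (hsub : [[z.re, w.re]] ×ℂ [[z.im, w.im]] ⊆ U) :
    (∫ x : ℝ in z.re..w.re, g (x + z.im * I)) - (∫ x : ℝ in z.re..w.re, g (x + w.im * I)) +
      I • (∫ y : ℝ in z.im..w.im, g (w.re + y * I)) -
      I • ∫ y : ℝ in z.im..w.im, g (z.re + y * I) = 0 := by
  have base : ∀ (p q : ℂ), [[p.re, q.re]] ×ℂ [[p.im, q.im]] ⊆ U →
      (0 ∉ Ioo (min p.im q.im) (max p.im q.im)) →
      (∫ x : ℝ in p.re..q.re, g (x + p.im * I)) - (∫ x : ℝ in p.re..q.re, g (x + q.im * I)) +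
      I • (∫ y : ℝ in p.im..q.im, g (q.re + y * I)) -
      I • ∫ y : ℝ in p.im..q.im, g (p.re + y * I) = 0 := by
    intro p q hsub' h0
    apply integral_boundary_rect_eq_zero_of_differentiable_on_off_countable g p q ∅
      countable_empty (Hc.mono hsub')
    rintro x ⟨hx, -⟩
    have hxU : x ∈ U := hsub' ⟨Ioo_minmax_subset_uIcc _ _ hx.1, Ioo_minmax_subset_uIcc _ _ hx.2⟩
    exact Hd x hxU (fun h => h0 (h ▸ hx.2))
  by_cases h0 : 0 ∈ Ioo (min z.im w.im) (max z.im w.im)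
  · have h0' : (0:ℝ) ∈ [[z.im, w.im]] := Ioo_minmax_subset_uIcc _ _ h0
    have hzim : z.im ∈ [[z.im, w.im]] := left_mem_uIcc
    have hwim : w.im ∈ [[z.im, w.im]] := right_mem_uIcc
    have hsubI : ∀ a b : ℝ, a ∈ [[z.im, w.im]] → b ∈ [[z.im, w.im]] →
        [[z.re, w.re]] ×ℂ [[a, b]] ⊆ U := by
      intro a b ha hb x hx
      exact hsub ⟨hx.1, uIcc_subset_uIcc ha hb hx.2⟩
    have hvert : ∀ (c : ℝ), c ∈ [[z.re, w.re]] → ∀ a b : ℝ, a ∈ [[z.im, w.im]] →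
        b ∈ [[z.im, w.im]] → IntervalIntegrable (fun y => g (c + y * I))
          MeasureTheory.volume a b := by
      intro c hc a b ha hb
      apply ContinuousOn.intervalIntegrable
      apply Hc.comp (by fun_prop : Continuous fun y : ℝ => (c:ℂ) + y * I).continuousOn
      intro y hy
      exact hsub ⟨by simpa using hc, by simpa using uIcc_subset_uIcc ha hb hy⟩
    have e1 := base z (w.re : ℂ) (by simpa using hsubI z.im 0 hzim h0')
      (by intro h; have h1 := h.1; have h2 := h.2; simp only [ofReal_im] at h1 h2
          rw [min_lt_iff] at h1; rw [lt_max_iff] at h2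
          rcases h1 with h1 | h1 <;> rcases h2 with h2 | h2 <;> linarith)
    have e2 := base (z.re : ℂ) w (by simpa using hsubI 0 w.im h0' hwim)
      (by intro h; have h1 := h.1; have h2 := h.2; simp only [ofReal_im] at h1 h2
          rw [min_lt_iff] at h1; rw [lt_max_iff] at h2
          rcases h1 with h1 | h1 <;> rcases h2 with h2 | h2 <;> linarith)
    simp only [ofReal_re, ofReal_im, ofReal_zero, zero_mul, add_zero, smul_eq_mul] at e1 e2 ⊢
    have adj1 := integral_add_adjacent_intervals (hvert w.re right_mem_uIcc z.im 0 hzim h0')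
      (hvert w.re right_mem_uIcc 0 w.im h0' hwim)
    have adj2 := integral_add_adjacent_intervals (hvert z.re left_mem_uIcc z.im 0 hzim h0')
      (hvert z.re left_mem_uIcc 0 w.im h0' hwim)
    linear_combination e1 + e2 - I * adj1 + I * adj2
  · exact base z w hsub h0

lemma differentiableAt_of_off_axis {U : Set ℂ} (hU : IsOpen U) {g : ℂ → ℂ}
    (Hc : ContinuousOn g U) (Hd : ∀ z ∈ U, z.im ≠ 0 → DifferentiableAt ℂ g z) :
    ∀ z ∈ U, DifferentiableAt ℂ g z := by
  intro z₀ hz₀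
  by_cases him : z₀.im ≠ 0
  · exact Hd z₀ hz₀ him
  obtain ⟨ε, hε, hball⟩ := Metric.isOpen_iff.1 hU z₀ hz₀
  set δ : ℝ := ε / 3 with hδdef
  have hδ : 0 < δ := by positivity
  set Jre : Set ℝ := [[z₀.re - δ, z₀.re + δ]] with hJre
  set Jim : Set ℝ := [[z₀.im - δ, z₀.im + δ]] with hJim
  set K : Set ℂ := Jre ×ℂ Jim with hK
  set Q : Set ℂ := Ioo (z₀.re - δ) (z₀.re + δ) ×ℂ Ioo (z₀.im - δ) (z₀.im + δ) with hQ
  have hJre' : Jre = Icc (z₀.re - δ) (z₀.re + δ) := uIcc_of_le (by linarith)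
  have hJim' : Jim = Icc (z₀.im - δ) (z₀.im + δ) := uIcc_of_le (by linarith)
  have hmem : ∀ x : ℂ, x ∈ K → x.re ∈ Icc (z₀.re-δ) (z₀.re+δ) ∧ x.im ∈ Icc (z₀.im-δ) (z₀.im+δ) :=
    fun x hx => ⟨hJre' ▸ hx.1, hJim' ▸ hx.2⟩
  have hKU : K ⊆ U := by
    intro x hx
    obtain ⟨h1, h2⟩ := hmem x hx
    rw [mem_Icc] at h1 h2
    apply hball
    rw [mem_ball_iff_norm]
    calc ‖x - z₀‖ ≤ |(x - z₀).re| + |(x - z₀).im| := Complex.norm_le_abs_re_add_abs_im _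
    _ ≤ δ + δ := by
        rw [sub_re, sub_im]
        gcongr <;> rw [abs_le] <;> constructor <;> linarith
    _ < ε := by rw [hδdef]; linarith
  have hQK : Q ⊆ K := fun x hx =>
    ⟨hJre' ▸ Ioo_subset_Icc_self hx.1, hJim' ▸ Ioo_subset_Icc_self hx.2⟩
  have hQopen : IsOpen Q := isOpen_Ioo.reProdIm isOpen_Ioo
  have hz₀Q : z₀ ∈ Q :=
    ⟨mem_Ioo.2 ⟨by linarith, by linarith⟩, mem_Ioo.2 ⟨by linarith, by linarith⟩⟩
  have hQco : ∀ z ∈ Q, z.re ∈ Jre ∧ z.im ∈ Jim := fun z hz => (hQK hz : z ∈ K)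
  have hx₀ : z₀.re ∈ Jre := (hQco z₀ hz₀Q).1
  have hy₀ : z₀.im ∈ Jim := (hQco z₀ hz₀Q).2
  have hvert : ∀ c ∈ Jre, ∀ a ∈ Jim, ∀ b ∈ Jim,
      IntervalIntegrable (fun t : ℝ => g (c + t * I)) MeasureTheory.volume a b := by
    intro c hc a ha b hb
    apply ContinuousOn.intervalIntegrable
    apply Hc.comp (by fun_prop : Continuous fun t : ℝ => (c:ℂ) + t * I).continuousOn
    intro t ht
    exact hKU ⟨by simpa using hc, by simpa using uIcc_subset_uIcc ha hb ht⟩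
  have hhor : ∀ c ∈ Jim, ∀ a ∈ Jre, ∀ b ∈ Jre,
      IntervalIntegrable (fun t : ℝ => g (t + c * I)) MeasureTheory.volume a b := by
    intro c hc a ha b hb
    apply ContinuousOn.intervalIntegrable
    apply Hc.comp (by fun_prop : Continuous fun t : ℝ => (t:ℂ) + c * I).continuousOn
    intro t ht
    exact hKU ⟨by simpa using uIcc_subset_uIcc ha hb ht, by simpa using hc⟩
  set x₀ := z₀.re
  set y₀ := z₀.im
  set h : ℂ → ℂ :=
    fun z => (∫ t in x₀..z.re, g (t + y₀ * I)) + I * ∫ t in y₀..z.im, g (z.re + t * I) with hh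
  have hincr : ∀ z ∈ Q, ∀ w ∈ Q, h w - h z =
      (∫ t in z.re..w.re, g (t + z.im * I)) + I * ∫ t in z.im..w.im, g (w.re + t * I) := by
    intro z hz w hw
    obtain ⟨hzre, hzim⟩ := hQco z hz
    obtain ⟨hwre, hwim⟩ := hQco w hw
    have rect := rect_eq_zero_off_axis Hc Hd ((z.re : ℂ) + (y₀ : ℂ) * I)
      ((w.re : ℂ) + (z.im : ℂ) * I)
      (by simp only [add_re, ofReal_re, mul_re, I_re, I_im, ofReal_im, add_im, mul_im]
          ring_nf
          intro x hx
          exact hKU ⟨uIcc_subset_uIcc hzre hwre hx.1, uIcc_subset_uIcc hy₀ hzim hx.2⟩)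
    simp only [add_re, ofReal_re, mul_re, I_re, I_im, ofReal_im, add_im, mul_im, smul_eq_mul,
      mul_zero, mul_one, zero_mul, sub_zero, add_zero, zero_add, zero_sub, neg_zero] at rect
    have s1 := integral_add_adjacent_intervals (hhor y₀ hy₀ x₀ hx₀ z.re hzre)
      (hhor y₀ hy₀ z.re hzre w.re hwre)
    have s2 := integral_add_adjacent_intervals (hvert w.re hwre y₀ hy₀ z.im hzim)
      (hvert w.re hwre z.im hzim w.im hwim)
    simp only [hh]
    linear_combination rect - s1 - I * s2
  have key : ∀ z ∈ Q, HasDerivAt h (g z) z := by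
    intro z hz
    rw [hasDerivAt_iff_isLittleO, Asymptotics.isLittleO_iff]
    intro c hc
    have hgz : ContinuousAt g z := Hc.continuousAt (hU.mem_nhds (hKU (hQK hz)))
    obtain ⟨d, hd, hgd⟩ := Metric.continuousAt_iff.1 hgz (c/2) (by positivity)
    obtain ⟨ρ, hρ, hρQ⟩ := Metric.isOpen_iff.1 hQopen z hz
    have hev : ∀ᶠ w in nhds z, w ∈ ball z (min ρ (d/2)) := ball_mem_nhds _ (by positivity)
    filter_upwards [hev] with w hw
    have hwQ : w ∈ Q := hρQ (mem_of_subset_of_mem (ball_subset_ball (min_le_left _ _)) hw)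
    have hwd : dist w z < d / 2 := lt_of_lt_of_le (mem_ball.1 hw) (min_le_right _ _)
    obtain ⟨hzre, hzim⟩ := hQco z hz
    obtain ⟨hwre, hwim⟩ := hQco w hwQ
    have hre_le : |w.re - z.re| ≤ ‖w - z‖ := by
      simpa [Complex.sub_re] using Complex.abs_re_le_norm (w - z)
    have him_le : |w.im - z.im| ≤ ‖w - z‖ := by
      simpa [Complex.sub_im] using Complex.abs_im_le_norm (w - z)
    have hdist : dist w z = ‖w - z‖ := dist_eq_norm _ _
    have hsplit : h w - h z - (w - z) • g z
        = (∫ t in z.re..w.re, (g (t + z.im * I) - g z))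
          + I * ∫ t in z.im..w.im, (g (w.re + t * I) - g z) := by
      rw [smul_eq_mul, hincr z hz w hwQ,
        intervalIntegral.integral_sub (hhor z.im hzim z.re hzre w.re hwre)
          intervalIntegrable_const,
        intervalIntegral.integral_sub (hvert w.re hwre z.im hzim w.im hwim)
          intervalIntegrable_const]
      simp only [intervalIntegral.integral_const, Complex.real_smul, smul_eq_mul]
      have hwz : ((w.re - z.re : ℝ) : ℂ) + ((w.im - z.im : ℝ) : ℂ) * I = w - z := by
        simp [Complex.ext_iff]
      linear_combination (g z) * hwz
    rw [hsplit]
    have hb1 : ‖∫ t in z.re..w.re, (g (t + z.im * I) - g z)‖ ≤ (c/2) * |w.re - z.re| := by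
      apply intervalIntegral.norm_integral_le_of_norm_le_const
      intro t ht
      have htle : |t - z.re| ≤ |w.re - z.re| := by
        rcases Set.mem_uIoc.mp ht with ⟨h1, h2⟩ | ⟨h1, h2⟩
        · rw [abs_of_pos (by linarith)]
          linarith [le_abs_self (w.re - z.re)]
        · rw [abs_of_nonpos (by linarith)]
          linarith [neg_le_abs (w.re - z.re)]
      have hdd : dist ((t : ℂ) + z.im * I) z < d := by
        have : ((t : ℂ) + z.im * I) - z = ((t - z.re : ℝ) : ℂ) := by simp [Complex.ext_iff]
        rw [dist_eq_norm, this]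
        calc ‖((t - z.re : ℝ) : ℂ)‖ = |t - z.re| := by rw [Complex.norm_real, Real.norm_eq_abs]
        _ ≤ |w.re - z.re| := htle
        _ ≤ ‖w - z‖ := hre_le
        _ < d := by rw [← hdist]; linarith
      exact le_of_lt (by rw [← dist_eq_norm]; exact hgd hdd)
    have hb2 : ‖∫ t in z.im..w.im, (g (w.re + t * I) - g z)‖ ≤ (c/2) * |w.im - z.im| := by
      apply intervalIntegral.norm_integral_le_of_norm_le_const
      intro t ht
      have htle : |t - z.im| ≤ |w.im - z.im| := by
        rcases Set.mem_uIoc.mp ht with ⟨h1, h2⟩ | ⟨h1, h2⟩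
        · rw [abs_of_pos (by linarith)]
          linarith [le_abs_self (w.im - z.im)]
        · rw [abs_of_nonpos (by linarith)]
          linarith [neg_le_abs (w.im - z.im), neg_abs_le (w.im - z.im)]
      have hdd : dist ((w.re : ℂ) + t * I) z < d := by
        rw [dist_eq_norm]
        calc ‖((w.re : ℂ) + t * I) - z‖
            ≤ |(((w.re : ℂ) + t * I) - z).re| + |(((w.re : ℂ) + t * I) - z).im| :=
              Complex.norm_le_abs_re_add_abs_im _
        _ = |w.re - z.re| + |t - z.im| := by simp
        _ ≤ ‖w - z‖ + ‖w - z‖ := add_le_add hre_le (htle.trans him_le)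
        _ < d := by rw [← hdist]; linarith
      exact le_of_lt (by rw [← dist_eq_norm]; exact hgd hdd)
    calc ‖(∫ t in z.re..w.re, (g (t + z.im * I) - g z))
          + I * ∫ t in z.im..w.im, (g (w.re + t * I) - g z)‖
        ≤ ‖∫ t in z.re..w.re, (g (t + z.im * I) - g z)‖
          + ‖I * ∫ t in z.im..w.im, (g (w.re + t * I) - g z)‖ := norm_add_le _ _
      _ ≤ (c/2) * |w.re - z.re| + (c/2) * |w.im - z.im| := by
          rw [norm_mul, Complex.norm_I, one_mul]; exact add_le_add hb1 hb2
      _ ≤ (c/2) * ‖w - z‖ + (c/2) * ‖w - z‖ :=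
          add_le_add (mul_le_mul_of_nonneg_left hre_le (by positivity))
            (mul_le_mul_of_nonneg_left him_le (by positivity))
      _ = c * ‖w - z‖ := by ring
  have hdiffQ : DifferentiableOn ℂ h Q :=
    fun z hz => (key z hz).differentiableAt.differentiableWithinAt
  have han : AnalyticOnNhd ℂ h Q := hdiffQ.analyticOnNhd hQopen
  have hEq : g =ᶠ[nhds z₀] deriv h := by
    filter_upwards [hQopen.mem_nhds hz₀Q] with z hz using ((key z hz).deriv).symm
  exact (han.deriv z₀ hz₀Q).differentiableAt.congr_of_eventuallyEq hEq

lemma differentiableAt_conj_conj {f : ℂ → ℂ} {w : ℂ} (hf : DifferentiableAt ℂ f w) :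
    DifferentiableAt ℂ (fun z => (starRingEnd ℂ) (f ((starRingEnd ℂ) z))) ((starRingEnd ℂ) w) := by
  set d := deriv f w with hd
  have hfd : HasFDerivAt f ((ContinuousLinearMap.smulRight (1 : ℂ →L[ℂ] ℂ) d).restrictScalars ℝ) w :=
    (hf.hasDerivAt.hasFDerivAt).restrictScalars ℝ
  have hconj1 : HasFDerivAt (starRingEnd ℂ) (Complex.conjCLE.toContinuousLinearMap) ((starRingEnd ℂ) w) :=
    Complex.conjCLE.hasFDerivAt
  have hconj2 : HasFDerivAt (starRingEnd ℂ) (Complex.conjCLE.toContinuousLinearMap)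
      ((f ∘ (starRingEnd ℂ)) ((starRingEnd ℂ) w)) :=
    Complex.conjCLE.hasFDerivAt
  have hfd' : HasFDerivAt f ((ContinuousLinearMap.smulRight (1 : ℂ →L[ℂ] ℂ) d).restrictScalars ℝ)
      ((starRingEnd ℂ) ((starRingEnd ℂ) w)) := by rwa [Complex.conj_conj]
  have H := hconj2.comp ((starRingEnd ℂ) w) (hfd'.comp ((starRingEnd ℂ) w) hconj1)
  have hL : (ContinuousLinearMap.smulRight (1 : ℂ →L[ℂ] ℂ) ((starRingEnd ℂ) d)).restrictScalars ℝ
      = (Complex.conjCLE.toContinuousLinearMap.comp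
          (((ContinuousLinearMap.smulRight (1 : ℂ →L[ℂ] ℂ) d).restrictScalars ℝ).comp
            Complex.conjCLE.toContinuousLinearMap)) := by
    apply ContinuousLinearMap.ext
    intro z
    simp [mul_comm]
  have H2 : HasFDerivAt (fun z => (starRingEnd ℂ) (f ((starRingEnd ℂ) z)))
      (ContinuousLinearMap.smulRight (1 : ℂ →L[ℂ] ℂ) ((starRingEnd ℂ) d)) ((starRingEnd ℂ) w) := by
    apply hasFDerivAt_of_restrictScalars _ H
    exact hL
  exact H2.differentiableAt


/-- Variant of Theorem 2 for a function taking purely imaginary values on Γ: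
the reflection formula becomes F(z) = -conj (f (conj (S z))) on Ω⁻. -/
theorem reflection_across_analytic_curve_imaginary
    (I : Set ℝ) (hIne : I.Nonempty) (hIopen : IsOpen I) (hIconn : I.OrdConnected)
    (V : Set ℂ) (hV : IsOpen V) (hIV : (Complex.ofReal '' I) ⊆ V)
    (γ : ℂ → ℂ) (hγdiff : ∀ z ∈ V, DifferentiableAt ℂ γ z)
    (hγinj : Set.InjOn γ V) (hγderiv : ∀ z ∈ V, deriv γ z ≠ 0)
    (Γ : Set ℂ) (hΓ : Γ = γ '' (Complex.ofReal '' I))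
    (Ω Ωp Ωm : Set ℂ) (hΩopen : IsOpen Ω)
    (hΩeq : Ω = Ωp ∪ Γ ∪ Ωm)
    (hd1 : Disjoint Ωp Γ) (hd2 : Disjoint Ωp Ωm) (hd3 : Disjoint Γ Ωm)
    (hΩp : IsOpen Ωp) (hΩm : IsOpen Ωm)
    (S : ℂ → ℂ) (hS : ∀ z ∈ Ω, DifferentiableAt ℂ S z)
    (hSΓ : ∀ z ∈ Γ, S z = starRingEnd ℂ z)
    (hSp : (starRingEnd ℂ) '' (S '' Ωp) = Ωm)
    (hSm : (starRingEnd ℂ) '' (S '' Ωm) = Ωp)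
    (hinv : ∀ z ∈ Ω, starRingEnd ℂ (S (starRingEnd ℂ (S z))) = z)
    (f : ℂ → ℂ) (hf : ∀ z ∈ Ωp, DifferentiableAt ℂ f z)
    (hfc : ContinuousOn f (Ωp ∪ Γ))
    (himag : ∀ z ∈ Γ, (f z).re = 0)
    (F : ℂ → ℂ)
    (hF1 : ∀ z ∈ Ωp ∪ Γ, F z = f z)
    (hF2 : ∀ z ∈ Ωm, F z = -starRingEnd ℂ (f (starRingEnd ℂ (S z)))) :
    ∀ z ∈ Ω, DifferentiableAt ℂ F z := by
  have hΩpΩ : Ωp ⊆ Ω := by rw [hΩeq]; exact fun x hx => Or.inl (Or.inl hx)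
  have hΓΩ : Γ ⊆ Ω := by rw [hΩeq]; exact fun x hx => Or.inl (Or.inr hx)
  have hΩmΩ : Ωm ⊆ Ω := by rw [hΩeq]; exact fun x hx => Or.inr hx
  have hτm : ∀ z ∈ Ωm, (starRingEnd ℂ) (S z) ∈ Ωp :=
    fun z hz => hSm ▸ ⟨S z, ⟨z, hz, rfl⟩, rfl⟩
  -- F is differentiable on Ωp
  have hFp : ∀ z ∈ Ωp, DifferentiableAt ℂ F z := by
    intro z hz
    have hev : F =ᶠ[nhds z] f := by
      filter_upwards [hΩp.mem_nhds hz] with x hx using hF1 x (Or.inl hx)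
    exact (hf z hz).congr_of_eventuallyEq hev
  -- F is differentiable on Ωm
  have hFm : ∀ z ∈ Ωm, DifferentiableAt ℂ F z := by
    intro z hz
    have h1 : DifferentiableAt ℂ (fun x => (starRingEnd ℂ) (f ((starRingEnd ℂ) x))) (S z) := by
      have h2 := differentiableAt_conj_conj (hf _ (hτm z hz))
      rwa [Complex.conj_conj] at h2
    have h3 : DifferentiableAt ℂ (fun x => -(starRingEnd ℂ) (f ((starRingEnd ℂ) (S x)))) z :=
      (h1.comp z (hS z (hΩmΩ hz))).neg
    have hev : F =ᶠ[nhds z] fun x => -(starRingEnd ℂ) (f ((starRingEnd ℂ) (S x))) := by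
      filter_upwards [hΩm.mem_nhds hz] with x hx using hF2 x hx
    exact h3.congr_of_eventuallyEq hev
  -- F is continuous on Ω
  have hFcont : ContinuousOn F Ω := by
    intro z hz
    rw [hΩeq] at hz
    rcases hz with hz | hz
    rcases hz with hz | hz
    · exact (hFp z hz).continuousAt.continuousWithinAt
    · -- z ∈ Γ
      have hFval : F z = f z := hF1 z (Or.inr hz)
      have himagz : -(starRingEnd ℂ) (f z) = f z := by
        apply Complex.ext <;> simp [himag z hz]
      have t1 : Filter.Tendsto F (nhdsWithin z (Ωp ∪ Γ)) (nhds (f z)) := by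
        apply Filter.Tendsto.congr' _ (hfc z (Or.inr hz))
        filter_upwards [self_mem_nhdsWithin] with x hx using (hF1 x hx).symm
      have hτz : (starRingEnd ℂ) (S z) = z := by rw [hSΓ z hz, Complex.conj_conj]
      have hτt : Filter.Tendsto (fun x => (starRingEnd ℂ) (S x)) (nhdsWithin z Ωm)
          (nhdsWithin z (Ωp ∪ Γ)) := by
        rw [tendsto_nhdsWithin_iff]
        constructor
        · have hc : Filter.Tendsto (fun x => (starRingEnd ℂ) (S x)) (nhds z)
              (nhds ((starRingEnd ℂ) (S z))) :=
            (Complex.continuous_conj.tendsto _).comp (hS z (hΓΩ hz)).continuousAt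
          rw [hτz] at hc
          exact hc.mono_left nhdsWithin_le_nhds
        · filter_upwards [self_mem_nhdsWithin] with x hx using Or.inl (hτm x hx)
      have t2 : Filter.Tendsto F (nhdsWithin z Ωm) (nhds (f z)) := by
        have hcomp : Filter.Tendsto (fun x => f ((starRingEnd ℂ) (S x))) (nhdsWithin z Ωm)
            (nhds (f z)) := Filter.Tendsto.comp (hfc z (Or.inr hz)) hτt
        have hneg : Filter.Tendsto (fun x => -(starRingEnd ℂ) (f ((starRingEnd ℂ) (S x))))
            (nhdsWithin z Ωm) (nhds (-(starRingEnd ℂ) (f z))) :=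
          ((Complex.continuous_conj.tendsto _).comp hcomp).neg
        rw [himagz] at hneg
        apply Filter.Tendsto.congr' _ hneg
        filter_upwards [self_mem_nhdsWithin] with x hx using (hF2 x hx).symm
      have hsup : nhdsWithin z Ω = nhdsWithin z (Ωp ∪ Γ) ⊔ nhdsWithin z Ωm := by
        rw [hΩeq, nhdsWithin_union]
      unfold ContinuousWithinAt
      rw [hFval, hsup]
      exact Filter.tendsto_sup.2 ⟨t1, t2⟩
    · exact (hFm z hz).continuousAt.continuousWithinAt
  -- main goal
  intro z hz
  rw [hΩeq] at hz
  rcases hz with hz | hz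
  rcases hz with hz | hz
  · exact hFp z hz
  · -- z ∈ Γ : the reflection gluing via Morera
    rw [hΓ] at hz
    obtain ⟨xc, ⟨x, hxI, rfl⟩, rfl⟩ := hz
    set x₀ : ℂ := (x : ℂ) with hx₀def
    have hx₀V : x₀ ∈ V := hIV ⟨x, hxI, rfl⟩
    have hx₀Γ : γ x₀ ∈ Γ := by rw [hΓ]; exact ⟨x₀, ⟨x, hxI, rfl⟩, rfl⟩
    -- γ is strictly differentiable at x₀
    have hγdiffV : DifferentiableOn ℂ γ V := fun v hv => (hγdiff v hv).differentiableWithinAt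
    have hγan : AnalyticAt ℂ γ x₀ := hγdiffV.analyticAt (hV.mem_nhds hx₀V)
    obtain ⟨p, hp⟩ := hγan
    have hsd : HasStrictDerivAt γ (p 1 fun _ => 1) x₀ := hp.hasStrictDerivAt
    have hdeq : deriv γ x₀ = (p 1 fun _ => 1) := hsd.hasDerivAt.deriv
    have hne : (p 1 fun _ => 1) ≠ 0 := hdeq ▸ hγderiv x₀ hx₀V
    -- a small ball around x₀ inside V mapped into Ω
    have hWopen : IsOpen (V ∩ γ ⁻¹' Ω) :=
      (hγdiffV.continuousOn).isOpen_inter_preimage hV hΩopen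
    have hx₀W : x₀ ∈ V ∩ γ ⁻¹' Ω := ⟨hx₀V, hΓΩ hx₀Γ⟩
    obtain ⟨r, hr, hball⟩ := Metric.isOpen_iff.1 hWopen x₀ hx₀W
    -- off-axis points of the ball are mapped off Γ
    have hoff : ∀ w ∈ Metric.ball x₀ r, w.im ≠ 0 → γ w ∈ Ωp ∪ Ωm := by
      intro w hw him
      have hwV : w ∈ V := (hball hw).1
      have hwΩ : γ w ∈ Ω := (hball hw).2
      have hnΓ : γ w ∉ Γ := by
        intro hmem
        rw [hΓ] at hmem
        obtain ⟨tc, ⟨t, htI, rfl⟩, heq⟩ := hmem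
        have : w = (t : ℂ) := hγinj hwV (hIV ⟨t, htI, rfl⟩) heq.symm
        rw [this] at him
        simp at him
      rw [hΩeq] at hwΩ
      rcases hwΩ with hwΩ | hwΩ
      rcases hwΩ with hwΩ | hwΩ
      · exact Or.inl hwΩ
      · exact absurd hwΩ hnΓ
      · exact Or.inr hwΩ
    -- the pulled-back function is differentiable on the ball by the Morera argument
    have hgd : ∀ w ∈ Metric.ball x₀ r, DifferentiableAt ℂ (F ∘ γ) w := by
      apply differentiableAt_of_off_axis Metric.isOpen_ball
      · exact hFcont.comp (hγdiffV.continuousOn.mono (fun w hw => (hball hw).1))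
          (fun w hw => (hball hw).2)
      · intro w hw him
        have hFd : DifferentiableAt ℂ F (γ w) := by
          rcases hoff w hw him with h | h
          · exact hFp _ h
          · exact hFm _ h
        exact hFd.comp w (hγdiff w (hball hw).1)
    have hgx₀ : DifferentiableAt ℂ (F ∘ γ) x₀ :=
      hgd x₀ (Metric.mem_ball_self hr)
    -- transfer back via the local inverse of γ
    set ψ := hsd.localInverse γ _ x₀ hne with hψdef
    have hψd : HasStrictDerivAt ψ (p 1 fun _ => 1)⁻¹ (γ x₀) := hsd.to_localInverse hne
    have hψx₀ : ψ (γ x₀) = x₀ :=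
      (hsd.hasStrictFDerivAt_equiv hne).localInverse_apply_image
    have hrinv : ∀ᶠ zz in nhds (γ x₀), γ (ψ zz) = zz :=
      (hsd.hasStrictFDerivAt_equiv hne).eventually_right_inverse
    have hψball : ∀ᶠ zz in nhds (γ x₀), ψ zz ∈ Metric.ball x₀ r := by
      apply hψd.hasDerivAt.differentiableAt.continuousAt.eventually_mem
      rw [hψx₀]
      exact Metric.isOpen_ball.mem_nhds (Metric.mem_ball_self hr)
    have hFev : F =ᶠ[nhds (γ x₀)] (F ∘ γ) ∘ ψ := by
      filter_upwards [hrinv] with zz hzz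
      simp only [Function.comp_apply, hzz]
    have hcomp : DifferentiableAt ℂ ((F ∘ γ) ∘ ψ) (γ x₀) := by
      apply DifferentiableAt.comp
      · rw [hψx₀]; exact hgx₀
      · exact hψd.hasDerivAt.differentiableAt
    exact hcomp.congr_of_eventuallyEq hFev
  · exact hFm z hz
end
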